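/- arXiv:1212.1471 — 9 statements merged into one kernel-verified Lean document; each statement's English description precedes it below -/
import Mathlib

section
/- For any left-invariant metric d on the symmetric group S_n, the distance from any adjacent transposition (i, i+1) to the identity equals the distance from (1, 2) to the identity, provided d satisfies the line property: d(π,σ) = d(π,ω) + d(ω,σ) if and only if ω is between π and σ (where ω is between π and σ means for every pair {a,b}, ω agrees with π or σ on the relative order of a and b). -/
open Equiv Finset

/-- The adjacent transposition swapping positions `i` and `i+1` (0-indexed);
identity if out of range. -/
def adjSwap (n i : ℕ) : Equiv.Perm (Fin n) :=
  if h : i + 1 < n then Equiv.swap ⟨i, Nat.lt_of_succ_lt h⟩ ⟨i + 1, h⟩ else 1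

/-- `ω` is between `π` and `σ`: on every pair `{a,b}`, `ω` agrees with `π` or with `σ`. -/
def Between {n : ℕ} (π ω σ : Equiv.Perm (Fin n)) : Prop :=
  ∀ a b : Fin n, (π⁻¹ a < π⁻¹ b ↔ ω⁻¹ a < ω⁻¹ b) ∨ (σ⁻¹ a < σ⁻¹ b ↔ ω⁻¹ a < ω⁻¹ b)

/-- Kendall tau distance: minimum number of adjacent transpositions transforming `π` into `σ`. -/
noncomputable def kendall {n : ℕ} (π σ : Equiv.Perm (Fin n)) : ℕ :=
  sInf {s | ∃ l : List ℕ, (∀ i ∈ l, i + 1 < n) ∧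
    σ = π * (l.map (adjSwap n)).prod ∧ l.length = s}

/-- The set of inversions between `π` and `σ` (each unordered pair `{i,j}` of disagreement
is recorded as the ordered pair `(i,j)` with `i` ranked before `j` by `π`). -/
def invSet {n : ℕ} (π σ : Equiv.Perm (Fin n)) : Finset (Fin n × Fin n) :=
  Finset.univ.filter fun p => π⁻¹ p.1 < π⁻¹ p.2 ∧ σ⁻¹ p.2 < σ⁻¹ p.1

/-- Elements `j` on whose relative order with `i` the permutations `π` and `σ` disagree. -/
def invWith {n : ℕ} (π σ : Equiv.Perm (Fin n)) (i : Fin n) : Finset (Fin n) :=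
  Finset.univ.filter fun j => ¬(π⁻¹ i < π⁻¹ j ↔ σ⁻¹ i < σ⁻¹ j)

/-- Weighted Kendall distance for weight function `φ` on adjacent transpositions
(`φ h` is the weight of swapping positions `h, h+1`, 0-indexed). -/
noncomputable def wKendall {n : ℕ} (φ : ℕ → ℝ) (π σ : Equiv.Perm (Fin n)) : ℝ :=
  sInf {w | ∃ l : List ℕ, (∀ i ∈ l, i + 1 < n) ∧
    σ = π * (l.map (adjSwap n)).prod ∧ (l.map φ).sum = w}

/-- `w(k:l)`: sum of adjacent-transposition weights between positions `min k l` and `max k l - 1`. -/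
def wsum (φ : ℕ → ℝ) (k l : ℕ) : ℝ := ∑ h ∈ Finset.Ico (min k l) (max k l), φ h

/-- The generalized (weighted) Spearman footrule `D_φ`. -/
noncomputable def DKendall {n : ℕ} (φ : ℕ → ℝ) (π σ : Equiv.Perm (Fin n)) : ℝ :=
  ∑ i : Fin n, wsum φ ((π⁻¹ i : Fin n) : ℕ) ((σ⁻¹ i : Fin n) : ℕ)

/-- Weighted transposition distance with weight function `φ` on transpositions. -/
noncomputable def wTrans {n : ℕ} (φ : Fin n → Fin n → ℝ) (π σ : Equiv.Perm (Fin n)) : ℝ :=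
  sInf {w | ∃ l : List (Fin n × Fin n), (∀ p ∈ l, p.1 ≠ p.2) ∧
    σ = π * (l.map fun p => Equiv.swap p.1 p.2).prod ∧
    (l.map fun p => φ p.1 p.2).sum = w}

/-- Weight of a path (as a list of vertices) in the complete graph `K_φ`. -/
def pathWt {n : ℕ} (φ : Fin n → Fin n → ℝ) (p : List (Fin n)) : ℝ :=
  ((p.zip p.tail).map fun q => φ q.1 q.2).sum

/-- `p` is a path from `a` to `b` (consecutive vertices distinct). -/
def IsPath {n : ℕ} (p : List (Fin n)) (a b : Fin n) : Prop :=
  p.head? = some a ∧ p.getLast? = some b ∧ p.Chain' (· ≠ ·)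

/-- Minimum weight of a path from `a` to `b` in `K_φ`. -/
noncomputable def minPathWt {n : ℕ} (φ : Fin n → Fin n → ℝ) (a b : Fin n) : ℝ :=
  sInf {w | ∃ p : List (Fin n), IsPath p a b ∧ pathWt φ p = w}

/-- The footrule-type lower/upper bounding function `D_φ` for transposition weights. -/
noncomputable def DTrans {n : ℕ} (φ : Fin n → Fin n → ℝ) (π σ : Equiv.Perm (Fin n)) : ℝ :=
  ∑ i : Fin n, minPathWt φ (π⁻¹ i) (σ⁻¹ i)

/-!
Write `s = (i, i+1)` and `t = (i+1, i+2)`. The braid relation `s t s = t s t` gives two geodesics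
`1, s, st, sts` and `1, t, ts, tst` to the same permutation, along each of which the line property
makes `d` additive. By left invariance every step of a geodesic costs `d 1 s` or `d 1 t`, so
`2 d(1,s) + d(1,t) = d(1, sts) = 2 d(1,t) + d(1,s)`. Finally `d(s,1) = d(1,s)` because `s` is an
involution, again by left invariance.
-/

lemma adjSwap_of_lt {n i : ℕ} (hi : i + 1 < n) :
    adjSwap n i = swap ⟨i, Nat.lt_of_succ_lt hi⟩ ⟨i + 1, hi⟩ :=
  dif_pos hi

lemma adjSwap_mul_self (n i : ℕ) : adjSwap n i * adjSwap n i = 1 := by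
  unfold adjSwap
  split_ifs
  · exact swap_mul_self _ _
  · exact one_mul 1

section Consecutive

variable {n : ℕ} {a b c : Fin n}

lemma between_one_swap_left (hab : (a : ℕ) + 1 = b) (hbc : (b : ℕ) + 1 = c) :
    Between 1 (swap a b) (swap a c) := by
  intro x y
  simp only [inv_one, Perm.one_apply, swap_inv, swap_apply_def, Fin.lt_def, Fin.ext_iff]
  split_ifs <;> omega

lemma between_one_swap_right (hab : (a : ℕ) + 1 = b) (hbc : (b : ℕ) + 1 = c) :
    Between 1 (swap b c) (swap a c) := by
  intro x y
  simp only [inv_one, Perm.one_apply, swap_inv, swap_apply_def, Fin.lt_def, Fin.ext_iff]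
  split_ifs <;> omega

lemma between_swap_left_mul (hab : (a : ℕ) + 1 = b) (hbc : (b : ℕ) + 1 = c) :
    Between (swap a b) (swap a b * swap b c) (swap a c) := by
  intro x y
  simp only [mul_inv_rev, swap_inv, Perm.mul_apply, swap_apply_def, Fin.lt_def, Fin.ext_iff]
  split_ifs <;> omega

lemma between_swap_right_mul (hab : (a : ℕ) + 1 = b) (hbc : (b : ℕ) + 1 = c) :
    Between (swap b c) (swap b c * swap a b) (swap a c) := by
  intro x y
  simp only [mul_inv_rev, swap_inv, Perm.mul_apply, swap_apply_def, Fin.lt_def, Fin.ext_iff]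
  split_ifs <;> omega

end Consecutive

section LineMetric

variable {n : ℕ} (d : Perm (Fin n) → Perm (Fin n) → ℝ)

lemma dist_one_eq_of_between (h_linv : ∀ η π σ, d (η * π) (η * σ) = d π σ)
    (h_line : ∀ π σ ω, Between π ω σ → d π σ = d π ω + d ω σ)
    {x y ρ : Perm (Fin n)} (hρ : x * y * x = ρ) (h₁ : Between 1 x ρ)
    (h₂ : Between x (x * y) ρ) :
    d 1 ρ = 2 * d 1 x + d 1 y := by
  have hy : d x (x * y) = d 1 y := by simpa using h_linv x 1 y
  have hx : d (x * y) ρ = d 1 x := by simpa [hρ] using h_linv (x * y) 1 x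
  rw [h_line _ _ _ h₁, h_line _ _ _ h₂, hy, hx]
  ring

lemma dist_one_swap_eq_of_succ (h_linv : ∀ η π σ, d (η * π) (η * σ) = d π σ)
    (h_line : ∀ π σ ω, Between π ω σ → d π σ = d π ω + d ω σ)
    {a b c : Fin n} (hab : (a : ℕ) + 1 = b) (hbc : (b : ℕ) + 1 = c) :
    d 1 (swap b c) = d 1 (swap a b) := by
  have hab' : a ≠ b := by omega
  have hac' : a ≠ c := by omega
  have hbc' : b ≠ c := by omega
  have hs : d 1 (swap a c) = 2 * d 1 (swap a b) + d 1 (swap b c) :=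
    dist_one_eq_of_between d h_linv h_line
      (by rw [swap_comm a b, swap_comm b c, swap_mul_swap_mul_swap hbc'.symm hac'.symm])
      (between_one_swap_left hab hbc) (between_swap_left_mul hab hbc)
  have ht : d 1 (swap a c) = 2 * d 1 (swap b c) + d 1 (swap a b) :=
    dist_one_eq_of_between d h_linv h_line (by rw [swap_mul_swap_mul_swap hab' hac', swap_comm])
      (between_one_swap_right hab hbc) (between_swap_right_mul hab hbc)
  linarith

lemma dist_one_adjSwap_succ (h_linv : ∀ η π σ, d (η * π) (η * σ) = d π σ)
    (h_line : ∀ π σ ω, Between π ω σ → d π σ = d π ω + d ω σ) {i : ℕ} (hi : i + 2 < n) :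
    d 1 (adjSwap n (i + 1)) = d 1 (adjSwap n i) := by
  rw [adjSwap_of_lt hi, adjSwap_of_lt (by omega : i + 1 < n)]
  exact dist_one_swap_eq_of_succ d h_linv h_line rfl rfl

lemma dist_one_comm_of_mul_self (h_linv : ∀ η π σ, d (η * π) (η * σ) = d π σ)
    {x : Perm (Fin n)} (hx : x * x = 1) : d x 1 = d 1 x := by
  simpa [hx] using (h_linv x x 1).symm

end LineMetric

theorem stmt0_general (n : ℕ) (d : Equiv.Perm (Fin n) → Equiv.Perm (Fin n) → ℝ)
    (h_linv : ∀ η π σ, d (η * π) (η * σ) = d π σ)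
    (h_line : ∀ π σ ω : Equiv.Perm (Fin n), d π σ = d π ω + d ω σ ↔ Between π ω σ)
    (i : ℕ) (hi : i + 1 < n) :
    d (adjSwap n i) 1 = d (adjSwap n 0) 1 := by
  rw [dist_one_comm_of_mul_self d h_linv (adjSwap_mul_self n i),
    dist_one_comm_of_mul_self d h_linv (adjSwap_mul_self n 0)]
  induction i with
  | zero => rfl
  | succ k ih =>
    rw [dist_one_adjSwap_succ d h_linv (fun π σ ω => (h_line π σ ω).mpr) hi]
    exact ih (by omega)

theorem stmt0 (n : ℕ) (hn : 3 ≤ n) (d : Equiv.Perm (Fin n) → Equiv.Perm (Fin n) → ℝ)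
    (h_nonneg : ∀ π σ, 0 ≤ d π σ)
    (h_eq : ∀ π σ, d π σ = 0 ↔ π = σ)
    (h_symm : ∀ π σ, d π σ = d σ π)
    (h_tri : ∀ π σ ω, d π σ ≤ d π ω + d ω σ)
    (h_linv : ∀ η π σ, d (η * π) (η * σ) = d π σ)
    (h_line : ∀ π σ ω : Equiv.Perm (Fin n), d π σ = d π ω + d ω σ ↔ Between π ω σ)
    (i : ℕ) (hi : i + 1 < n) :
    d (adjSwap n i) 1 = d (adjSwap n 0) 1 :=
  stmt0_general n d h_linv h_line i hi
end

section
/- If a sequence of adjacent transpositions (τ_1,...,τ_s) transforming π into σ has minimum length among all such sequences, then the intermediate permutations π_i = πτ_1⋯τ_i lie on a line: for all i < j < k, π_j is between π_i and π_k. -/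
open Equiv Finset

/-! Let `invSet ω σ` be the set of pairs on which `ω` and `σ` disagree. An adjacent transposition
changes its size by at most one, and bubble sort turns `π` into `σ` in `#(invSet π σ)` steps; hence a
minimal transform has exactly `#(invSet π σ)` steps and each of them removes an inversion without
creating one, so the sets `invSet π_m σ` decrease along the transform. A decreasing chain of
disagreement sets forces betweenness: on a pair where `π_j` agrees with `σ` so does `π_k`, and on a
pair where it disagrees so does `π_i`. -/

section SwapOrder

variable {α : Type*} [LinearOrder α] {p q u v : α}

lemma CovBy.lt_or_eq_of_swap_lt_swap (hpq : p ⋖ q) (h : swap p q u < swap p q v) :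
    u < v ∨ u = q ∧ v = p := by
  have hbetween : ∀ c, p < c → ¬c < q := fun _ hc => hpq.2 hc
  have := hpq.lt
  rw [swap_apply_def, swap_apply_def] at h
  split_ifs at h <;> grind

end SwapOrder

variable {n : ℕ}

lemma adjSwap_eq_swap {p q : Fin n} (hpq : p ⋖ q) : adjSwap n p = swap p q := by
  have hq : (p : ℕ) + 1 = q := Nat.covBy_iff_add_one_eq.1 (Fin.covBy_iff.1 hpq)
  rw [adjSwap, dif_pos (hq ▸ q.isLt)]
  congr

lemma adjSwap_eq_one_or_swap (h : ℕ) :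
    adjSwap n h = 1 ∨ ∃ p q : Fin n, p ⋖ q ∧ adjSwap n h = swap p q := by
  by_cases hh : h + 1 < n
  · refine Or.inr ⟨⟨h, by omega⟩, ⟨h + 1, hh⟩, ?_, dif_pos hh⟩
    simp [Fin.covBy_iff]
  · exact Or.inl (dif_neg hh)

section Inversions

variable {π ω ρ σ τ : Perm (Fin n)} {x y : Fin n}

lemma mem_invSet : (x, y) ∈ invSet ω σ ↔ ω⁻¹ x < ω⁻¹ y ∧ σ⁻¹ y < σ⁻¹ x := by
  simp [invSet]

lemma invSet_self (σ : Perm (Fin n)) : invSet σ σ = ∅ := by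
  ext ⟨x, y⟩
  simpa [mem_invSet] using le_of_lt

lemma lt_iff_lt_iff_notMem_invSet :
    (ω⁻¹ x < ω⁻¹ y ↔ σ⁻¹ x < σ⁻¹ y) ↔ (x, y) ∉ invSet ω σ ∧ (y, x) ∉ invSet ω σ := by
  simp only [mem_invSet, not_and, not_lt]
  have hω : ω⁻¹ x = ω⁻¹ y ↔ x = y := ω⁻¹.injective.eq_iff
  have hσ : σ⁻¹ x = σ⁻¹ y ↔ x = y := σ⁻¹.injective.eq_iff
  grind

lemma between_of_invSet_subset (hρ : invSet ρ τ ⊆ invSet ω τ) (hω : invSet ω τ ⊆ invSet π τ) :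
    Between π ω ρ := by
  intro a b
  by_cases hωτ : ω⁻¹ a < ω⁻¹ b ↔ τ⁻¹ a < τ⁻¹ b
  · have hρτ : ρ⁻¹ a < ρ⁻¹ b ↔ τ⁻¹ a < τ⁻¹ b := by
      rw [lt_iff_lt_iff_notMem_invSet] at hωτ ⊢
      exact ⟨fun h => hωτ.1 (hρ h), fun h => hωτ.2 (hρ h)⟩
    exact Or.inr (hρτ.trans hωτ.symm)
  · have hπτ : ¬(π⁻¹ a < π⁻¹ b ↔ τ⁻¹ a < τ⁻¹ b) := by
      rw [lt_iff_lt_iff_notMem_invSet] at hωτ ⊢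
      exact fun h => hωτ ⟨fun h' => h.1 (hω h'), fun h' => h.2 (hω h')⟩
    exact Or.inl (by tauto)

lemma invSet_mul_swap_subset {p q : Fin n} (hpq : p ⋖ q) (ω σ : Perm (Fin n)) :
    invSet (ω * swap p q) σ ⊆ insert (ω q, ω p) (invSet ω σ) := by
  rintro ⟨x, y⟩ hxy
  rw [mem_invSet] at hxy
  simp only [mul_inv_rev, swap_inv, Perm.mul_apply] at hxy
  rcases hpq.lt_or_eq_of_swap_lt_swap hxy.1 with hlt | ⟨hx, hy⟩
  · exact mem_insert_of_mem (mem_invSet.2 ⟨hlt, hxy.2⟩)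
  · rw [Perm.inv_eq_iff_eq] at hx hy
    simp [hx, hy]

lemma card_invSet_le_card_invSet_mul_adjSwap_add_one (ω σ : Perm (Fin n)) (h : ℕ) :
    #(invSet ω σ) ≤ #(invSet (ω * adjSwap n h) σ) + 1 := by
  rcases adjSwap_eq_one_or_swap (n := n) h with hid | ⟨p, q, hpq, hswap⟩
  · simp [hid]
  · have hsub := invSet_mul_swap_subset hpq (ω * swap p q) σ
    rw [mul_assoc, swap_mul_self, mul_one] at hsub
    rw [hswap]
    exact (card_le_card hsub).trans (card_insert_le _ _)

lemma card_invSet_le_card_invSet_mul_prod_add (ω σ : Perm (Fin n)) (w : List ℕ) :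
    #(invSet ω σ) ≤ #(invSet (ω * (w.map (adjSwap n)).prod) σ) + w.length := by
  induction w generalizing ω with
  | nil => simp
  | cons h w ih =>
    have := ih (ω * adjSwap n h)
    have := card_invSet_le_card_invSet_mul_adjSwap_add_one ω σ h
    simp only [List.map_cons, List.prod_cons, List.length_cons, ← mul_assoc]
    omega

lemma invSet_mul_swap_ssubset {p q : Fin n} (hpq : p ⋖ q) (hdesc : σ⁻¹ (ω q) < σ⁻¹ (ω p)) :
    invSet (ω * swap p q) σ ⊂ invSet ω σ := by
  have hinv : (ω * swap p q)⁻¹ (ω p) = q ∧ (ω * swap p q)⁻¹ (ω q) = p := by simp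
  have hsub : invSet (ω * swap p q) σ ⊆ invSet ω σ := by
    intro z hz
    rcases mem_insert.1 (invSet_mul_swap_subset hpq ω σ hz) with rfl | hz'
    · exact absurd (mem_invSet.1 hz).2 (asymm hdesc)
    · exact hz'
  refine (ssubset_iff_of_subset hsub).2 ⟨(ω p, ω q), ?_, ?_⟩
  · exact mem_invSet.2 ⟨by simpa using hpq.lt, hdesc⟩
  · rw [mem_invSet, hinv.1, hinv.2]
    exact fun h => asymm h.1 hpq.lt

lemma invSet_mul_adjSwap_subset_of_card_lt (h : ℕ)
    (hlt : #(invSet (ω * adjSwap n h) σ) < #(invSet ω σ)) :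
    invSet (ω * adjSwap n h) σ ⊆ invSet ω σ := by
  rcases adjSwap_eq_one_or_swap (n := n) h with hid | ⟨p, q, hpq, hswap⟩
  · rw [hid, mul_one]
  rw [hswap] at hlt ⊢
  rcases lt_or_gt_of_ne (σ⁻¹.injective.ne (ω.injective.ne hpq.lt.ne')) with hdesc | hasc
  · exact (invSet_mul_swap_ssubset hpq hdesc).subset
  · -- otherwise undoing the swap would remove an inversion
    have := invSet_mul_swap_ssubset (ω := ω * swap p q) hpq (by simpa using hasc)
    rw [mul_assoc, swap_mul_self, mul_one] at this
    exact absurd (card_lt_card this) (asymm hlt)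

lemma eq_of_forall_covBy_lt (h : ∀ p q : Fin n, p ⋖ q → σ⁻¹ (π p) < σ⁻¹ (π q)) : π = σ := by
  have hmono : StrictMono (σ⁻¹ * π) := (strictMono_iff_forall_covBy _).2 h
  ext x
  have hx : σ⁻¹ (π x) = x := hmono.apply_eq
  rw [Perm.inv_eq_iff_eq] at hx
  rw [hx]

lemma exists_adjSwap_word_length_le_card_invSet (π σ : Perm (Fin n)) :
    ∃ l : List ℕ, (∀ i ∈ l, i + 1 < n) ∧ σ = π * (l.map (adjSwap n)).prod ∧
      l.length ≤ #(invSet π σ) := by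
  induction hc : #(invSet π σ) using Nat.strong_induction_on generalizing π with
  | _ c ih =>
    by_cases hsorted : ∀ p q : Fin n, p ⋖ q → σ⁻¹ (π p) < σ⁻¹ (π q)
    · exact ⟨[], by simp, by simp [eq_of_forall_covBy_lt hsorted], by simp⟩
    push Not at hsorted
    obtain ⟨p, q, hpq, hle⟩ := hsorted
    have hdesc : σ⁻¹ (π q) < σ⁻¹ (π p) :=
      hle.lt_of_ne (σ⁻¹.injective.ne (π.injective.ne hpq.lt.ne'))
    have hlt := card_lt_card (invSet_mul_swap_ssubset hpq hdesc)
    obtain ⟨l, hvalid, hl, hlen⟩ := ih _ (hc ▸ hlt) (π * swap p q) rfl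
    refine ⟨p :: l, ?_, ?_, ?_⟩
    · have hq : (p : ℕ) + 1 = q := Nat.covBy_iff_add_one_eq.1 (Fin.covBy_iff.1 hpq)
      simpa [hq] using hvalid
    · rw [hl, List.map_cons, List.prod_cons, adjSwap_eq_swap hpq, mul_assoc]
    · simp only [List.length_cons]
      omega

lemma kendall_le_card_invSet (π σ : Perm (Fin n)) : kendall π σ ≤ #(invSet π σ) := by
  obtain ⟨l, hvalid, hl, hlen⟩ := exists_adjSwap_word_length_le_card_invSet π σ
  refine (Nat.sInf_le ?_).trans hlen
  exact ⟨l, hvalid, hl, rfl⟩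

end Inversions

section Path

variable (π : Perm (Fin n)) (l : List ℕ)

def pathPerm (m : ℕ) : Perm (Fin n) := π * ((l.take m).map (adjSwap n)).prod

lemma pathPerm_succ {m : ℕ} (hm : m < l.length) :
    pathPerm π l (m + 1) = pathPerm π l m * adjSwap n l[m] := by
  rw [pathPerm, pathPerm, List.take_add_one, List.getElem?_eq_getElem hm, Option.toList_some,
    List.map_append, List.prod_append, mul_assoc]
  simp only [List.map_cons, List.map_nil, List.prod_cons, List.prod_nil, mul_one]

lemma pathPerm_mul_drop (m : ℕ) :
    pathPerm π l m * ((l.drop m).map (adjSwap n)).prod = π * (l.map (adjSwap n)).prod := by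
  rw [pathPerm, mul_assoc, ← List.prod_append, ← List.map_append, List.take_append_drop]

variable {π l} {σ : Perm (Fin n)}

lemma card_invSet_pathPerm_succ_lt (htrans : σ = π * (l.map (adjSwap n)).prod)
    (hmin : l.length = kendall π σ) {m : ℕ} (hm : m < l.length) :
    #(invSet (pathPerm π l (m + 1)) σ) < #(invSet (pathPerm π l m) σ) := by
  have hstart : l.length ≤ #(invSet π σ) := hmin ▸ kendall_le_card_invSet π σ
  have hprefix : #(invSet π σ) ≤ #(invSet (pathPerm π l m) σ) + m := by
    simpa [pathPerm, hm.le] using card_invSet_le_card_invSet_mul_prod_add π σ (l.take m)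
  have hsuffix : #(invSet (pathPerm π l (m + 1)) σ) ≤ l.length - (m + 1) := by
    have := card_invSet_le_card_invSet_mul_prod_add (pathPerm π l (m + 1)) σ (l.drop (m + 1))
    rwa [pathPerm_mul_drop, ← htrans, invSet_self, card_empty, zero_add, List.length_drop]
      at this
  omega

lemma invSet_pathPerm_subset (htrans : σ = π * (l.map (adjSwap n)).prod)
    (hmin : l.length = kendall π σ) {m m' : ℕ} (hmm' : m ≤ m') (hm' : m' ≤ l.length) :
    invSet (pathPerm π l m') σ ⊆ invSet (pathPerm π l m) σ := by
  induction m', hmm' using Nat.le_induction with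
  | base => exact Subset.rfl
  | succ m' hmm' ih =>
    have hlt := card_invSet_pathPerm_succ_lt htrans hmin hm'
    rw [pathPerm_succ π l hm'] at hlt ⊢
    exact (invSet_mul_adjSwap_subset_of_card_lt _ hlt).trans (ih (by omega))

end Path

theorem stmt5_general (n : ℕ) (π σ : Equiv.Perm (Fin n)) (l : List ℕ)
    (htrans : σ = π * (l.map (adjSwap n)).prod)
    (hmin : l.length = kendall π σ)
    (i j k : ℕ) (hij : i < j) (hjk : j < k) (hk : k ≤ l.length) :
    Between (π * ((l.take i).map (adjSwap n)).prod)
            (π * ((l.take j).map (adjSwap n)).prod)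
            (π * ((l.take k).map (adjSwap n)).prod) :=
  between_of_invSet_subset (τ := σ)
    (invSet_pathPerm_subset htrans hmin hjk.le hk)
    (invSet_pathPerm_subset htrans hmin hij.le (hjk.le.trans hk))

theorem stmt5 (n : ℕ) (π σ : Equiv.Perm (Fin n)) (l : List ℕ)
    (hvalid : ∀ i ∈ l, i + 1 < n)
    (htrans : σ = π * (l.map (adjSwap n)).prod)
    (hmin : l.length = kendall π σ)
    (i j k : ℕ) (hij : i < j) (hjk : j < k) (hk : k ≤ l.length) :
    Between (π * ((l.take i).map (adjSwap n)).prod)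
            (π * ((l.take j).map (adjSwap n)).prod)
            (π * ((l.take k).map (adjSwap n)).prod) :=
  stmt5_general n π σ l htrans hmin i j k hij hjk hk
end

section
/- The set of elements that must be swapped with i gives a length lower bound: for any transform τ ∈ A(π,σ) (sequence of adjacent transpositions converting π to σ), the walk of element i through positions under τ has length at least |I_i(π,σ)|, where I_i(π,σ) is the set of elements j such that π and σ disagree on the relative order of the pair {i,j}. -/
open Equiv Finset

/-! An adjacent transposition reverses the relative order of exactly the two elements it swaps.
If `π` and `σ` disagree on the pair `{i, j}`, the order of `i` and `j` therefore flips at some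
step `t` of the transform; at that step `i` moves, into the position held by `j` just before.
So every `j ∈ I_i(π, σ)` is recovered from a step at which `i` moves. -/

theorem exists_lt_not_iff_succ_of_not_iff {P : ℕ → Prop} {L : ℕ} (h : ¬(P 0 ↔ P L)) :
    ∃ t < L, ¬(P t ↔ P (t + 1)) := by
  induction L with
  | zero => exact absurd Iff.rfl h
  | succ L ih =>
    by_cases hL : P 0 ↔ P L
    · exact ⟨L, L.lt_succ_self, fun hstep => h (hL.trans hstep)⟩
    · obtain ⟨t, ht, hflip⟩ := ih hL
      exact ⟨t, ht.trans L.lt_succ_self, hflip⟩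

@[simp]
theorem adjSwap_inv (n h : ℕ) : (adjSwap n h)⁻¹ = adjSwap n h := by
  unfold adjSwap; split_ifs <;> simp

theorem adjSwap_apply_eq_of_not_lt_iff {n h : ℕ} {p q : Fin n}
    (hflip : ¬(p < q ↔ adjSwap n h p < adjSwap n h q)) : adjSwap n h p = q := by
  unfold adjSwap at *
  split_ifs at * with hh
  · rw [Equiv.swap_apply_def, Equiv.swap_apply_def] at *
    split_ifs at * <;> simp only [Fin.ext_iff, Fin.lt_def] at * <;>
      first | omega | simp at hflip
  · simp at hflip

theorem card_invWith_le_card_moves {n : ℕ} (ω : ℕ → Perm (Fin n)) (L : ℕ)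
    (hstep : ∀ t < L, ∃ h, ω (t + 1) = ω t * adjSwap n h) (i : Fin n) :
    (invWith (ω 0) (ω L) i).card ≤
      ((range L).filter fun t => (ω t)⁻¹ i ≠ (ω (t + 1))⁻¹ i).card := by
  refine (card_le_card ?_).trans (card_image_le (f := fun t => ω t ((ω (t + 1))⁻¹ i)))
  intro j hj
  simp only [invWith, mem_filter, mem_univ, true_and] at hj
  obtain ⟨t, ht, hflip⟩ :=
    exists_lt_not_iff_succ_of_not_iff (P := fun t => (ω t)⁻¹ i < (ω t)⁻¹ j) hj
  obtain ⟨h, hω⟩ := hstep t ht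
  have hpos : ∀ x, (ω (t + 1))⁻¹ x = adjSwap n h ((ω t)⁻¹ x) := fun x => by
    rw [hω, mul_inv_rev, adjSwap_inv]; rfl
  rw [hpos, hpos] at hflip
  have hij := adjSwap_apply_eq_of_not_lt_iff hflip
  have hne : (ω t)⁻¹ i ≠ (ω t)⁻¹ j := fun heq => hflip (by simp [heq])
  refine mem_image.2 ⟨t, mem_filter.2 ⟨mem_range.2 ht, ?_⟩, ?_⟩
  · rw [hpos, hij]; exact hne
  · show ω t ((ω (t + 1))⁻¹ i) = j
    rw [hpos, hij]
    exact (ω t).apply_symm_apply j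

theorem stmt8_general (n : ℕ) (π σ : Equiv.Perm (Fin n)) (l : List ℕ)
    (htrans : σ = π * (l.map (adjSwap n)).prod) (i : Fin n) :
    (invWith π σ i).card ≤
      ((Finset.range l.length).filter fun t =>
        (π * ((l.take t).map (adjSwap n)).prod)⁻¹ i ≠
        (π * ((l.take (t + 1)).map (adjSwap n)).prod)⁻¹ i).card := by
  have hstep : ∀ t < l.length, ∃ h, π * ((l.take (t + 1)).map (adjSwap n)).prod =
      π * ((l.take t).map (adjSwap n)).prod * adjSwap n h := fun t ht =>
    ⟨l[t], by
      rw [List.take_add_one, List.getElem?_eq_getElem ht, List.map_append, List.prod_append,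
        mul_assoc]
      simp⟩
  simpa [htrans] using
    card_invWith_le_card_moves (fun t => π * ((l.take t).map (adjSwap n)).prod) l.length hstep i

theorem stmt8 (n : ℕ) (π σ : Equiv.Perm (Fin n)) (l : List ℕ)
    (hvalid : ∀ i ∈ l, i + 1 < n)
    (htrans : σ = π * (l.map (adjSwap n)).prod) (i : Fin n) :
    (invWith π σ i).card ≤
      ((Finset.range l.length).filter fun t =>
        (π * ((l.take t).map (adjSwap n)).prod)⁻¹ i ≠
        (π * ((l.take (t + 1)).map (adjSwap n)).prod)⁻¹ i).card :=
  stmt8_general n π σ l htrans i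
end

section
/- For a decreasing weight function φ on adjacent transpositions (i.e., φ((i,i+1)) ≤ φ((j,j+1)) whenever i > j), the weighted Kendall distance satisfies d_φ(π,σ) = Σ_{i=1}^{n} (1/2)·(Σ_{j=π⁻¹(i)}^{ℓ_i - 1} φ((j, j+1)) + Σ_{j=σ⁻¹(i)}^{ℓ_i - 1} φ((j, j+1))), where ℓ_i = (π⁻¹(i) + σ⁻¹(i) + |I_i(π,σ)|)/2 and I_i(π,σ) is the set of elements j on whose relative order with i the permutations π and σ disagree. -/
open Equiv Finset

/-!
Write `pos π i` for the position of `i` in `π`, and call `j` an overtaker of `i` if it comes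
after `i` in `π` but before `i` in `σ`. The peak `ℓ_i = pos π i + #overtakers` equals the
paper's `(π⁻¹(i) + σ⁻¹(i) + |I_i|)/2`, and the right-hand side is the potential
`Φ(π) = ∑ᵢ ½ (w(pos π i, ℓ_i) + w(pos σ i, ℓ_i))`, which vanishes at `π = σ`.

Swapping the elements `u, v` at positions `h, h+1` of `π` only moves the peaks of `u` and `v`.
If `σ` ranks `v` before `u`, then `Φ` drops by `φ(ℓ_v - 1)`; otherwise it grows by `φ(ℓ_u)`.
As `φ` is nonnegative and decreasing and `ℓ_v - 1 ≥ h`, no adjacent transposition lowers `Φ`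
by more than its weight `φ h`, so `Φ ≤ d_φ`. Conversely, if `π ≠ σ`, let `u` be the last
element of `π` with an overtaker: all later elements appear in `σ`-order, so the element `v`
right after `u` precedes `u` in `σ` and has no overtaker. Swapping them lowers `Φ` by exactly
`φ h` and the number of inversions by one, so iterating reaches `σ` at total cost `Φ`.
-/

namespace Fintype

lemma sum_add_pair_eq_sum_add_pair {α M : Type*} [Fintype α] [DecidableEq α] [AddCommMonoid M]
    {f g : α → M} {a b : α} (hab : a ≠ b) (hfg : ∀ x, x ≠ a → x ≠ b → f x = g x) :
    ∑ x, f x + (g a + g b) = ∑ x, g x + (f a + f b) := by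
  have split (k : α → M) : ∑ x, k x = k a + k b + ∑ x ∈ (univ.erase a).erase b, k x := by
    rw [← add_sum_erase _ _ (mem_univ a),
      ← add_sum_erase _ _ (mem_erase.2 ⟨hab.symm, mem_univ b⟩), add_assoc]
  rw [split f, split g, Finset.sum_congr rfl fun x hx =>
    hfg x (ne_of_mem_erase (mem_of_mem_erase hx)) (ne_of_mem_erase hx)]
  abel

end Fintype

namespace WeightedKendall

variable {n : ℕ}

def pos (π : Perm (Fin n)) (i : Fin n) : ℕ := π⁻¹ i

def overtakers (π σ : Perm (Fin n)) (i : Fin n) : Finset (Fin n) :=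
  {j | pos π i < pos π j ∧ pos σ j < pos σ i}

def peak (π σ : Perm (Fin n)) (i : Fin n) : ℕ := pos π i + #(overtakers π σ i)

lemma pos_lt (π : Perm (Fin n)) (i : Fin n) : pos π i < n := (π⁻¹ i).isLt

lemma pos_injective (π : Perm (Fin n)) : Function.Injective (pos π) :=
  fun _ _ h => π⁻¹.injective (Fin.ext h)

lemma exists_pos_eq (π : Perm (Fin n)) {k : ℕ} (hk : k < n) : ∃ i, pos π i = k :=
  ⟨π ⟨k, hk⟩, by simp [pos]⟩

lemma mem_overtakers {π σ : Perm (Fin n)} {i j : Fin n} :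
    j ∈ overtakers π σ i ↔ pos π i < pos π j ∧ pos σ j < pos σ i := by
  simp [overtakers]

lemma overtakers_self (σ : Perm (Fin n)) (i : Fin n) : overtakers σ σ i = ∅ := by
  ext j
  simp only [mem_overtakers, notMem_empty, iff_false]
  omega

lemma card_filter_pos_lt (π : Perm (Fin n)) {k : ℕ} (hk : k ≤ n) :
    #{j | pos π j < k} = k := by
  have : ({j | pos π j < k} : Finset (Fin n))
      = ({p | (p : ℕ) < k} : Finset (Fin n)).map π.toEmbedding := by
    ext j
    simp only [mem_map_equiv, mem_filter, mem_univ, true_and]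
    rfl
  rw [this, card_map, Fin.card_filter_val_lt, min_eq_right hk]

lemma peak_lt (π σ : Perm (Fin n)) (i : Fin n) : peak π σ i < n := by
  have hsub : overtakers π σ i ⊆ ({j | ¬ pos π j < pos π i + 1} : Finset (Fin n)) := by
    intro j hj
    rw [mem_overtakers] at hj
    simp only [mem_filter, mem_univ, true_and]
    omega
  have := card_filter_add_card_filter_not (s := univ) (fun j => pos π j < pos π i + 1)
  rw [card_filter_pos_lt π (pos_lt π i), card_univ, Fintype.card_fin] at this
  have := card_le_card hsub
  unfold peak
  omega

lemma card_filter_lt_and_lt_add_card_overtakers (π σ : Perm (Fin n)) (i : Fin n) :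
    #{j | pos σ j < pos σ i ∧ pos π j < pos π i} + #(overtakers π σ i) = pos σ i := by
  have hsplit : ({j | pos σ j < pos σ i ∧ ¬ pos π j < pos π i} : Finset (Fin n))
      = overtakers π σ i := by
    ext j
    simp only [mem_overtakers, mem_filter, mem_univ, true_and]
    by_cases hji : j = i
    · subst hji; simp
    · have := (pos_injective π).ne hji
      omega
  have h := card_filter_add_card_filter_not (s := ({j | pos σ j < pos σ i} : Finset (Fin n)))
    (fun j => pos π j < pos π i)
  rwa [filter_filter, filter_filter, hsplit, card_filter_pos_lt σ (pos_lt σ i).le] at h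

lemma pos_add_card_overtakers_comm (π σ : Perm (Fin n)) (i : Fin n) :
    pos σ i + #(overtakers σ π i) = pos π i + #(overtakers π σ i) := by
  have hπσ := card_filter_lt_and_lt_add_card_overtakers π σ i
  have hσπ := card_filter_lt_and_lt_add_card_overtakers σ π i
  simp only [and_comm (a := pos π _ < _)] at hσπ
  omega

lemma pos_le_peak (π σ : Perm (Fin n)) (i : Fin n) : pos σ i ≤ peak π σ i := by
  have := pos_add_card_overtakers_comm π σ i
  unfold peak
  omega

lemma invWith_eq_union (π σ : Perm (Fin n)) (i : Fin n) :
    invWith π σ i = overtakers π σ i ∪ overtakers σ π i := by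
  ext j
  simp only [invWith, mem_union, mem_overtakers, mem_filter, mem_univ, true_and]
  change ¬(pos π i < pos π j ↔ pos σ i < pos σ j) ↔ _
  by_cases hji : j = i
  · subst hji; simp
  · have := (pos_injective π).ne hji
    have := (pos_injective σ).ne hji
    omega

lemma peak_eq (π σ : Perm (Fin n)) (i : Fin n) :
    (pos π i + pos σ i + #(invWith π σ i)) / 2 = peak π σ i := by
  have hdisj : Disjoint (overtakers π σ i) (overtakers σ π i) := by
    rw [disjoint_left]
    intro j hj hj'
    rw [mem_overtakers] at hj hj'
    omega
  rw [invWith_eq_union, card_union_of_disjoint hdisj]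
  have := pos_add_card_overtakers_comm π σ i
  unfold peak
  omega

lemma mul_adjSwap_mul_adjSwap (π : Perm (Fin n)) (h : ℕ) :
    π * adjSwap n h * adjSwap n h = π := by
  unfold adjSwap
  split_ifs <;> simp [mul_assoc]

lemma pos_mul_adjSwap (π : Perm (Fin n)) {h : ℕ} (hn : h + 1 < n) (i : Fin n) :
    pos (π * adjSwap n h) i = Equiv.swap h (h + 1) (pos π i) := by
  simp only [pos, mul_inv_rev, Perm.mul_apply, adjSwap, dif_pos hn, swap_inv, swap_apply_def,
    Fin.ext_iff]
  split_ifs <;> simp_all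

section Swap

variable {π σ : Perm (Fin n)} {h : ℕ} {u v : Fin n}

lemma pos_mul_adjSwap_left (hn : h + 1 < n) (hu : pos π u = h) :
    pos (π * adjSwap n h) u = h + 1 := by
  rw [pos_mul_adjSwap π hn, hu, swap_apply_left]

lemma pos_mul_adjSwap_right (hn : h + 1 < n) (hv : pos π v = h + 1) :
    pos (π * adjSwap n h) v = h := by
  rw [pos_mul_adjSwap π hn, hv, swap_apply_right]

lemma pos_mul_adjSwap_of_ne (hn : h + 1 < n) (hu : pos π u = h) (hv : pos π v = h + 1)
    {i : Fin n} (hiu : i ≠ u) (hiv : i ≠ v) :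
    pos (π * adjSwap n h) i = pos π i := by
  rw [pos_mul_adjSwap π hn, swap_apply_of_ne_of_ne]
  · exact hu ▸ (pos_injective π).ne hiu
  · exact hv ▸ (pos_injective π).ne hiv

lemma overtakers_mul_adjSwap_of_ne (hn : h + 1 < n) (hu : pos π u = h) (hv : pos π v = h + 1)
    {i : Fin n} (hiu : i ≠ u) (hiv : i ≠ v) :
    overtakers (π * adjSwap n h) σ i = overtakers π σ i := by
  have hi := (pos_injective π).ne hiu
  have hi' := (pos_injective π).ne hiv
  ext j
  simp only [mem_overtakers, pos_mul_adjSwap π hn, swap_apply_def]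
  split_ifs <;> omega

lemma overtakers_mul_adjSwap_left (hn : h + 1 < n) (hu : pos π u = h) (hv : pos π v = h + 1) :
    overtakers (π * adjSwap n h) σ u = (overtakers π σ u).erase v := by
  ext j
  have hjv : j = v ↔ pos π j = h + 1 :=
    ⟨by rintro rfl; exact hv, fun e => pos_injective π (e.trans hv.symm)⟩
  simp only [mem_overtakers, mem_erase, pos_mul_adjSwap π hn, swap_apply_def, hu]
  split_ifs <;> omega

lemma card_overtakers_mul_adjSwap_left_add_one (hn : h + 1 < n) (hu : pos π u = h)
    (hv : pos π v = h + 1) (hinv : pos σ v < pos σ u) :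
    #(overtakers (π * adjSwap n h) σ u) + 1 = #(overtakers π σ u) := by
  rw [overtakers_mul_adjSwap_left hn hu hv, card_erase_add_one (by rw [mem_overtakers]; omega)]

lemma overtakers_mul_adjSwap_right (hn : h + 1 < n) (hu : pos π u = h) (hv : pos π v = h + 1)
    (hinv : pos σ v < pos σ u) :
    overtakers (π * adjSwap n h) σ v = overtakers π σ v := by
  have h' := overtakers_mul_adjSwap_left (σ := σ) hn (pos_mul_adjSwap_right hn hv)
    (pos_mul_adjSwap_left hn hu)
  rw [mul_adjSwap_mul_adjSwap] at h'
  rw [h', erase_eq_of_notMem (by rw [mem_overtakers]; omega)]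

end Swap

noncomputable def peakTerm (φ : ℕ → ℝ) (p q l : ℕ) : ℝ :=
  1 / 2 * (∑ j ∈ Ico p l, φ j + ∑ j ∈ Ico q l, φ j)

lemma peakTerm_succ_left (φ : ℕ → ℝ) {p q l : ℕ} (hpl : p < l) :
    peakTerm φ (p + 1) q l = peakTerm φ p q l - φ p / 2 := by
  rw [peakTerm, peakTerm, sum_eq_sum_Ico_succ_bot hpl]
  ring

lemma peakTerm_succ_succ (φ : ℕ → ℝ) {p q l : ℕ} (hp : p ≤ l) (hq : q ≤ l) :
    peakTerm φ (p + 1) q (l + 1) = peakTerm φ p q l + φ l - φ p / 2 := by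
  have hbot := sum_eq_sum_Ico_succ_bot (Nat.lt_succ_of_le hp) φ
  have htop := sum_Ico_succ_top hp φ
  have htop' := sum_Ico_succ_top hq φ
  rw [peakTerm, peakTerm, htop']
  linarith

noncomputable def potential (φ : ℕ → ℝ) (π σ : Perm (Fin n)) : ℝ :=
  ∑ i, peakTerm φ (pos π i) (pos σ i) (peak π σ i)

lemma potential_self (φ : ℕ → ℝ) (σ : Perm (Fin n)) : potential φ σ σ = 0 := by
  simp [potential, peakTerm, peak, overtakers_self]

lemma potential_eq_potential_mul_adjSwap_add (φ : ℕ → ℝ) {π σ : Perm (Fin n)} {h : ℕ}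
    {u v : Fin n} (hn : h + 1 < n) (hu : pos π u = h) (hv : pos π v = h + 1)
    (hinv : pos σ v < pos σ u) :
    potential φ π σ = potential φ (π * adjSwap n h) σ + φ (h + #(overtakers π σ v)) := by
  have huv : u ≠ v := by rintro rfl; omega
  have hcard_u := card_overtakers_mul_adjSwap_left_add_one hn hu hv hinv
  have hover_v := overtakers_mul_adjSwap_right hn hu hv hinv
  have hterm_u : peakTerm φ (pos (π * adjSwap n h) u) (pos σ u) (peak (π * adjSwap n h) σ u)
      = peakTerm φ (pos π u) (pos σ u) (peak π σ u) - φ h / 2 := by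
    have hpeak : peak (π * adjSwap n h) σ u = peak π σ u := by
      unfold peak
      rw [pos_mul_adjSwap_left hn hu, hu]
      omega
    rw [pos_mul_adjSwap_left hn hu, hpeak, hu]
    exact peakTerm_succ_left φ (by unfold peak; omega)
  have hterm_v : peakTerm φ (pos π v) (pos σ v) (peak π σ v)
      = peakTerm φ (pos (π * adjSwap n h) v) (pos σ v) (peak (π * adjSwap n h) σ v)
        + φ (h + #(overtakers π σ v)) - φ h / 2 := by
    have hq := pos_le_peak (π * adjSwap n h) σ v
    simp only [peak, pos_mul_adjSwap_right hn hv, hover_v, hv] at hq ⊢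
    rw [add_right_comm]
    exact peakTerm_succ_succ φ (Nat.le_add_right _ _) hq
  have hsum := Fintype.sum_add_pair_eq_sum_add_pair (M := ℝ) huv
    (f := fun i => peakTerm φ (pos (π * adjSwap n h) i) (pos σ i) (peak (π * adjSwap n h) σ i))
    (g := fun i => peakTerm φ (pos π i) (pos σ i) (peak π σ i))
    fun i hiu hiv => by
      simp only [peak, pos_mul_adjSwap_of_ne hn hu hv hiu hiv,
        overtakers_mul_adjSwap_of_ne hn hu hv hiu hiv]
  unfold potential
  linarith

lemma potential_le_add_potential_mul_adjSwap {φ : ℕ → ℝ}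
    (hφ0 : ∀ i, i + 1 < n → 0 ≤ φ i) (hdec : ∀ i j, j ≤ i → i + 1 < n → φ i ≤ φ j)
    (π σ : Perm (Fin n)) {h : ℕ} (hn : h + 1 < n) :
    potential φ π σ ≤ φ h + potential φ (π * adjSwap n h) σ := by
  obtain ⟨u, hu⟩ := exists_pos_eq π (Nat.lt_of_succ_lt hn)
  obtain ⟨v, hv⟩ := exists_pos_eq π hn
  have huv : u ≠ v := by rintro rfl; omega
  rcases ((pos_injective σ).ne huv).lt_or_gt with hord | hinv
  · -- viewed from `π * adjSwap n h`, the pair `v u` is inverted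
    have hstep := potential_eq_potential_mul_adjSwap_add φ hn (pos_mul_adjSwap_right hn hv)
      (pos_mul_adjSwap_left hn hu) hord
    rw [mul_adjSwap_mul_adjSwap] at hstep
    have hpeak := peak_lt (π * adjSwap n h) σ u
    rw [peak, pos_mul_adjSwap_left hn hu] at hpeak
    linarith [hφ0 h hn, hφ0 (h + #(overtakers (π * adjSwap n h) σ u)) (by omega)]
  · have hpeak := peak_lt π σ v
    rw [peak, hv] at hpeak
    linarith [potential_eq_potential_mul_adjSwap_add φ hn hu hv hinv,
      hdec (h + #(overtakers π σ v)) h (Nat.le_add_right _ _) (by omega)]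

lemma potential_le_sum {φ : ℕ → ℝ} (hφ0 : ∀ i, i + 1 < n → 0 ≤ φ i)
    (hdec : ∀ i j, j ≤ i → i + 1 < n → φ i ≤ φ j) {π σ : Perm (Fin n)} {l : List ℕ}
    (hl : ∀ i ∈ l, i + 1 < n) (hσ : σ = π * (l.map (adjSwap n)).prod) :
    potential φ π σ ≤ (l.map φ).sum := by
  induction l generalizing π with
  | nil =>
    simp only [List.map_nil, List.prod_nil, mul_one] at hσ
    simp [hσ, potential_self]
  | cons h l ih =>
    rw [List.map_cons, List.prod_cons, ← mul_assoc] at hσ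
    rw [List.map_cons, List.sum_cons]
    linarith [potential_le_add_potential_mul_adjSwap hφ0 hdec π σ (hl h List.mem_cons_self),
      ih (fun i hi => hl i (List.mem_cons_of_mem h hi)) hσ]

lemma eq_of_forall_overtakers_eq_empty {π σ : Perm (Fin n)}
    (hπσ : ∀ i, overtakers π σ i = ∅) : π = σ := by
  have hσπ (i : Fin n) : overtakers σ π i = ∅ := by
    ext j
    have := (hπσ j).symm ▸ notMem_empty i
    simp only [mem_overtakers, notMem_empty, iff_false] at this ⊢
    omega
  refine inv_injective (Equiv.ext fun i => Fin.ext ?_)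
  have := pos_add_card_overtakers_comm π σ i
  simp only [hπσ, hσπ, card_empty] at this
  exact this.symm

lemma exists_adjacent_inversion {π σ : Perm (Fin n)} (hne : π ≠ σ) :
    ∃ h u v, h + 1 < n ∧ pos π u = h ∧ pos π v = h + 1 ∧ pos σ v < pos σ u ∧
      overtakers π σ v = ∅ := by
  have hS : ({i | (overtakers π σ i).Nonempty} : Finset (Fin n)).Nonempty := by
    by_contra hS
    exact hne (eq_of_forall_overtakers_eq_empty (by simpa [filter_eq_empty_iff] using hS))
  obtain ⟨u, hu, hmax⟩ := exists_max_image _ (pos π) hS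
  obtain ⟨j, hj⟩ := (mem_filter.1 hu).2
  rw [mem_overtakers] at hj
  have hn : pos π u + 1 < n := by have := pos_lt π j; omega
  obtain ⟨v, hv⟩ := exists_pos_eq π hn
  have hv_empty : overtakers π σ v = ∅ := by
    by_contra hne'
    have := hmax v (mem_filter.2 ⟨mem_univ _, nonempty_iff_ne_empty.2 hne'⟩)
    omega
  refine ⟨_, u, v, hn, rfl, hv, ?_, hv_empty⟩
  have : pos σ v ≤ pos σ j := by
    rcases eq_or_ne j v with rfl | hjv
    · rfl
    · have : j ∉ overtakers π σ v := by simp [hv_empty]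
      rw [mem_overtakers] at this
      have := (pos_injective π).ne hjv
      omega
  omega

def inversionCount (π σ : Perm (Fin n)) : ℕ := ∑ i, #(overtakers π σ i)

lemma inversionCount_mul_adjSwap_add_one {π σ : Perm (Fin n)} {h : ℕ} {u v : Fin n}
    (hn : h + 1 < n) (hu : pos π u = h) (hv : pos π v = h + 1) (hinv : pos σ v < pos σ u) :
    inversionCount (π * adjSwap n h) σ + 1 = inversionCount π σ := by
  have huv : u ≠ v := by rintro rfl; omega
  have hsum := Fintype.sum_add_pair_eq_sum_add_pair huv
    (f := fun i => #(overtakers (π * adjSwap n h) σ i)) (g := fun i => #(overtakers π σ i))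
    fun i hiu hiv => by simp only [overtakers_mul_adjSwap_of_ne hn hu hv hiu hiv]
  have := card_overtakers_mul_adjSwap_left_add_one hn hu hv hinv
  simp only [overtakers_mul_adjSwap_right hn hu hv hinv] at hsum
  unfold inversionCount
  omega

lemma exists_list_sum_eq_potential (φ : ℕ → ℝ) (π σ : Perm (Fin n)) :
    ∃ l : List ℕ, (∀ i ∈ l, i + 1 < n) ∧
      σ = π * (l.map (adjSwap n)).prod ∧ (l.map φ).sum = potential φ π σ := by
  induction hN : inversionCount π σ generalizing π with
  | zero =>
    obtain rfl := eq_of_forall_overtakers_eq_empty fun i =>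
      card_eq_zero.1 (sum_eq_zero_iff.1 hN i (mem_univ i))
    exact ⟨[], by simp, by simp, by simp [potential_self]⟩
  | succ N ih =>
    have hne : π ≠ σ := by rintro rfl; simp [inversionCount, overtakers_self] at hN
    obtain ⟨h, u, v, hn, hu, hv, hinv, hv_empty⟩ := exists_adjacent_inversion hne
    obtain ⟨l, hl, hσ, hsum⟩ := ih (π * adjSwap n h) (by
      have := inversionCount_mul_adjSwap_add_one hn hu hv hinv
      omega)
    refine ⟨h :: l, ?_, ?_, ?_⟩
    · simpa [hn] using hl
    · rwa [List.map_cons, List.prod_cons, ← mul_assoc]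
    · rw [List.map_cons, List.sum_cons, hsum,
        potential_eq_potential_mul_adjSwap_add φ hn hu hv hinv, hv_empty, card_empty, add_zero,
        add_comm]

lemma isLeast_potential {φ : ℕ → ℝ} (hφ0 : ∀ i, i + 1 < n → 0 ≤ φ i)
    (hdec : ∀ i j, j ≤ i → i + 1 < n → φ i ≤ φ j) (π σ : Perm (Fin n)) :
    IsLeast {w | ∃ l : List ℕ, (∀ i ∈ l, i + 1 < n) ∧
      σ = π * (l.map (adjSwap n)).prod ∧ (l.map φ).sum = w} (potential φ π σ) :=
  ⟨exists_list_sum_eq_potential φ π σ, by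
    rintro w ⟨l, hl, hσ, rfl⟩
    exact potential_le_sum hφ0 hdec hl hσ⟩

lemma potential_eq_sum_peakTerm (φ : ℕ → ℝ) (π σ : Perm (Fin n)) :
    potential φ π σ = ∑ i : Fin n, peakTerm φ (pos π i) (pos σ i)
      ((pos π i + pos σ i + #(invWith π σ i)) / 2) := by
  simp only [potential, peak_eq]

end WeightedKendall

theorem stmt9 (n : ℕ) (φ : ℕ → ℝ)
    (hφ0 : ∀ i, i + 1 < n → 0 ≤ φ i)
    (hdec : ∀ i j, j ≤ i → i + 1 < n → φ i ≤ φ j)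
    (π σ : Equiv.Perm (Fin n)) :
    wKendall φ π σ = ∑ i : Fin n,
      (1 / 2) *
        ((∑ j ∈ Finset.Ico ((π⁻¹ i : Fin n) : ℕ)
            ((((π⁻¹ i : Fin n) : ℕ) + ((σ⁻¹ i : Fin n) : ℕ) + (invWith π σ i).card) / 2), φ j) +
         (∑ j ∈ Finset.Ico ((σ⁻¹ i : Fin n) : ℕ)
            ((((π⁻¹ i : Fin n) : ℕ) + ((σ⁻¹ i : Fin n) : ℕ) + (invWith π σ i).card) / 2), φ j)) := by
  exact (WeightedKendall.isLeast_potential hφ0 hdec π σ).csInf_eq.trans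
    (WeightedKendall.potential_eq_sum_peakTerm φ π σ)
end

section
/- Borda's rule with scores s_1 > s_2 > s_3 ≥ 0 fails the majority criterion for 3 candidates: for any such scores there exists an odd m and a profile of m votes in which one candidate is ranked first by a strict majority but has strictly smaller total Borda score than another candidate. Specifically, if (m+1)/2 votes are (a,b,c) and (m-1)/2 votes are (b,c,a), then the Borda score difference between a and b equals s_1 − m(s_2−s_3)/2 − (s_2+s_3)/2, which is negative whenever m > (2s_1 − s_2 − s_3)/(s_2 − s_3). -/
open Equiv Finset

theorem stmt11 (s1 s2 s3 : ℝ) (h12 : s2 < s1) (h23 : s3 < s2) (h3 : 0 ≤ s3) :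
    (∃ m : ℕ, Odd m ∧
      ((m + 1 : ℝ) / 2) * s1 + ((m - 1 : ℝ) / 2) * s3 <
        ((m + 1 : ℝ) / 2) * s2 + ((m - 1 : ℝ) / 2) * s1) ∧
    (∀ m : ℕ,
      (((m + 1 : ℝ) / 2) * s1 + ((m - 1 : ℝ) / 2) * s3) -
          (((m + 1 : ℝ) / 2) * s2 + ((m - 1 : ℝ) / 2) * s1) =
        s1 - (m : ℝ) * (s2 - s3) / 2 - (s2 + s3) / 2) ∧
    (∀ m : ℕ, (m : ℝ) > (2 * s1 - s2 - s3) / (s2 - s3) →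
      ((m + 1 : ℝ) / 2) * s1 + ((m - 1 : ℝ) / 2) * s3 <
        ((m + 1 : ℝ) / 2) * s2 + ((m - 1 : ℝ) / 2) * s1) := by
  have hpos : (0:ℝ) < s2 - s3 := by linarith
  have key : ∀ m : ℕ, (m : ℝ) > (2 * s1 - s2 - s3) / (s2 - s3) →
      ((m + 1 : ℝ) / 2) * s1 + ((m - 1 : ℝ) / 2) * s3 <
        ((m + 1 : ℝ) / 2) * s2 + ((m - 1 : ℝ) / 2) * s1 := by
    intro m hm
    rw [gt_iff_lt, div_lt_iff₀ hpos] at hm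
    nlinarith [hm]
  refine ⟨?_, fun m => by ring, key⟩
  set B := (2 * s1 - s2 - s3) / (s2 - s3) with hB
  refine ⟨2 * ⌈B⌉₊ + 1, ⟨⌈B⌉₊, by ring⟩, key _ ?_⟩
  have h1 : B ≤ (⌈B⌉₊ : ℝ) := Nat.le_ceil B
  push_cast
  linarith
end

section
/- For a nonnegative weight function φ on all transpositions of S_n, the weighted transposition distance from a single transposition (a b) to the identity satisfies d_φ((a b), e) ≤ 2·wt(p*) where p* is a minimum-weight path from a to b in the complete graph K_φ on [n] whose edge (i,j) has weight φ((i j)). Moreover, for a path p = (v_0 = a, v_1, ..., v_k = b), the transposition (a b) can be written as a product of 2k−1 transpositions of consecutive path vertices, of total weight 2·wt(p) − φ((v_{k−1} v_k)). -/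
open Equiv Finset

/-! Let `a = v₀, v₁, …, v_k = b` be a walk with `a ≠ b`. If `v₁ ≠ b`, then `(a b)` is the conjugate
`(a v₁)(v₁ b)(a v₁)`; if the walk returns, `v₁ = b`, then `(a b)` is the conjugate of `(v₂ b)` by
`(b v₂)(a b)`. Recursing on the shorter walk writes `(a b)` as a product of transpositions along the
edges of the walk in which every edge occurs twice except the last one, which occurs once. With
nonnegative weights this costs at most `2 wt(p)`, and taking the infimum over paths bounds `d_φ`. -/

theorem List.IsChain.rel_of_mem_zip_tail {α : Type*} {R : α → α → Prop} :
    ∀ {p : List α}, p.IsChain R → ∀ q ∈ p.zip p.tail, R q.1 q.2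
  | [], _, _, hq => by simp at hq
  | [_], _, _, hq => by simp at hq
  | _ :: _ :: _, hp, q, hq => by
    rw [List.isChain_cons_cons] at hp
    rw [List.tail_cons, List.zip_cons_cons, List.mem_cons] at hq
    rcases hq with rfl | hq
    · exact hp.1
    · exact hp.2.rel_of_mem_zip_tail q hq

theorem List.Perm.reverse_append_append {β : Type*} [DecidableEq β] {xs N D E : List β}
    (h : N.Perm (D ++ E)) : (xs.reverse ++ N ++ xs).Perm (xs ++ D ++ (xs ++ E)) := by
  rw [List.perm_iff_count] at h ⊢
  intro q
  simp only [List.count_append, List.count_reverse, h q]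
  omega

theorem List.Perm.sum_map_add_eq {β M : Type*} [AddCommMonoid M] {l E : List β} {e : β}
    (hl : l.Perm (E.dropLast ++ E)) (he : E.getLast? = some e) (f : β → M) :
    (l.map f).sum + f e = (E.map f).sum + (E.map f).sum := by
  conv_rhs => enter [1]; rw [← List.dropLast_append_getLast? e he]
  rw [(hl.map f).sum_eq, List.map_append, List.sum_append, List.map_append, List.sum_append,
    List.map_singleton, List.sum_singleton, add_right_comm]

theorem List.Perm.subset_of_dropLast_append {β : Type*} {l E : List β}
    (hl : l.Perm (E.dropLast ++ E)) : l ⊆ E := fun _ hq =>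
  (List.mem_append.mp (hl.subset hq)).elim List.mem_of_mem_dropLast id

section Swap

variable {α : Type*} [DecidableEq α]

-- `(b c)(a b)` is a 3-cycle, or 1 when `a = c`, so its cube is trivial.
theorem swap_mul_swap_mul_swap_mul_swap_mul_swap {a b c : α} (hab : a ≠ b) (hbc : b ≠ c) :
    swap b c * swap a b * swap b c * swap a b * swap b c = swap a b := by
  by_cases hac : a = c
  · subst hac
    simp [swap_comm b a]
  · rw [swap_mul_swap_mul_swap hab hac, ← swap_mul_swap_mul_swap (Ne.symm hac) (Ne.symm hbc)]
    simp [mul_assoc]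

theorem exists_perm_prod_map_swap_eq_swap :
    ∀ (p : List α) {a b : α}, a ≠ b → p.head? = some a → p.getLast? = some b →
      p.IsChain (· ≠ ·) → ∃ l : List (α × α),
        l.Perm ((p.zip p.tail).dropLast ++ p.zip p.tail) ∧
        (l.map fun q => swap q.1 q.2).prod = swap a b
  | [], _, _, _, ha, _, _ => by simp at ha
  | [_], _, _, hab, ha, hb, _ => by
    simp only [List.head?_cons, List.getLast?_singleton, Option.some.injEq] at ha hb
    exact absurd (ha.symm.trans hb) hab
  | [x, y], _, _, _, ha, hb, _ => by
    simp only [List.head?_cons, List.getLast?_cons_cons, List.getLast?_singleton,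
      Option.some.injEq] at ha hb
    subst ha hb
    exact ⟨[(x, y)], by simp, by simp⟩
  | a :: v :: w :: r, _, b, hab, ha, hb, hc => by
    obtain rfl := Option.some.inj ha
    rw [List.getLast?_cons_cons] at hb
    obtain ⟨hav, hc⟩ := List.isChain_cons_cons.mp hc
    by_cases hvb : v = b
    · subst hvb
      rw [List.getLast?_cons_cons] at hb
      obtain ⟨hvw, hc⟩ := List.isChain_cons_cons.mp hc
      obtain ⟨N, hN, hNprod⟩ := exists_perm_prod_map_swap_eq_swap (w :: r) hvw.symm rfl hb hc
      obtain ⟨u, r, rfl⟩ : ∃ u r', r = u :: r' := by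
        cases r with
        | nil => exact absurd (Option.some.inj hb) hvw.symm
        | cons u r' => exact ⟨u, r', rfl⟩
      refine ⟨(v, w) :: (a, v) :: (N ++ [(a, v), (v, w)]), ?_, ?_⟩
      · simp only [List.tail_cons, List.zip_cons_cons, List.dropLast_cons_cons] at hN ⊢
        exact hN.reverse_append_append (xs := [(a, v), (v, w)])
      · simp only [List.map_cons, List.map_append, List.prod_cons, List.prod_append, hNprod,
          List.map_nil, List.prod_nil, mul_one, swap_comm w v]
        simpa only [mul_assoc] using swap_mul_swap_mul_swap_mul_swap_mul_swap hav hvw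
    · obtain ⟨N, hN, hNprod⟩ := exists_perm_prod_map_swap_eq_swap (v :: w :: r) hvb rfl hb hc
      refine ⟨(a, v) :: (N ++ [(a, v)]), ?_, ?_⟩
      · simp only [List.tail_cons, List.zip_cons_cons, List.dropLast_cons_cons] at hN ⊢
        exact hN.reverse_append_append (xs := [(a, v)])
      · simp only [List.map_cons, List.map_append, List.prod_cons, List.prod_append, hNprod,
          List.map_nil, List.prod_nil, mul_one, swap_comm a v, swap_comm v b, ← mul_assoc]
        exact swap_mul_swap_mul_swap (Ne.symm hvb) (Ne.symm hab)

end Swap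

theorem IsPath.two_le_length {n : ℕ} {p : List (Fin n)} {a b : Fin n} (hp : IsPath p a b)
    (hab : a ≠ b) : 2 ≤ p.length := by
  obtain ⟨ha, hb, -⟩ := hp
  match p, ha, hb with
  | [_], ha, hb =>
    simp only [List.head?_cons, List.getLast?_singleton, Option.some.injEq] at ha hb
    exact absurd (ha.symm.trans hb) hab
  | _ :: _ :: _, _, _ => simp

theorem wTrans_le_sum_map {n : ℕ} {φ : Fin n → Fin n → ℝ} (hφ0 : ∀ a b, 0 ≤ φ a b)
    {π σ : Perm (Fin n)} {l : List (Fin n × Fin n)} (hl : ∀ q ∈ l, q.1 ≠ q.2)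
    (hσ : σ = π * (l.map fun q => swap q.1 q.2).prod) :
    wTrans φ π σ ≤ (l.map fun q => φ q.1 q.2).sum := by
  refine csInf_le ⟨0, ?_⟩ ⟨l, hl, hσ, rfl⟩
  rintro _ ⟨l', -, -, rfl⟩
  exact List.sum_nonneg fun x hx => by
    obtain ⟨q, -, rfl⟩ := List.mem_map.mp hx
    exact hφ0 _ _

theorem IsPath.exists_getLast?_zip_tail {n : ℕ} {p : List (Fin n)} {a b : Fin n}
    (hp : IsPath p a b) (hab : a ≠ b) : ∃ e, (p.zip p.tail).getLast? = some e := by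
  have hE : p.zip p.tail ≠ [] := by
    rw [← List.length_pos_iff, List.length_zip, List.length_tail]
    have := hp.two_le_length hab
    omega
  exact ⟨_, List.getLast?_eq_some_getLast hE⟩

theorem wTrans_swap_le_two_mul_pathWt {n : ℕ} {φ : Fin n → Fin n → ℝ} (hφ0 : ∀ a b, 0 ≤ φ a b)
    {p : List (Fin n)} {a b : Fin n} (hp : IsPath p a b) (hab : a ≠ b) :
    wTrans φ (swap a b) 1 ≤ 2 * pathWt φ p := by
  obtain ⟨e, he⟩ := hp.exists_getLast?_zip_tail hab
  obtain ⟨ha, hb, hc⟩ := hp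
  obtain ⟨l, hl, hprod⟩ := exists_perm_prod_map_swap_eq_swap p hab ha hb hc
  have hdist : ∀ q ∈ l, q.1 ≠ q.2 := fun q hq =>
    hc.rel_of_mem_zip_tail q (hl.subset_of_dropLast_append hq)
  have hle := wTrans_le_sum_map hφ0 hdist (by rw [hprod, swap_mul_self])
  have hwt := hl.sum_map_add_eq he fun q => φ q.1 q.2
  unfold pathWt
  linarith [hφ0 e.1 e.2]

theorem stmt12_general (n : ℕ) (φ : Fin n → Fin n → ℝ)
    (hφ0 : ∀ a b, 0 ≤ φ a b)
    (a b : Fin n) (hab : a ≠ b) :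
    wTrans φ (Equiv.swap a b) 1 ≤ 2 * minPathWt φ a b ∧
    ∀ p : List (Fin n), IsPath p a b → 2 ≤ p.length →
      ∃ l : List (Fin n × Fin n),
        (∀ q ∈ l, q ∈ p.zip p.tail ∨ (q.2, q.1) ∈ p.zip p.tail) ∧
        l.length = 2 * (p.length - 1) - 1 ∧
        Equiv.swap a b = (l.map fun q => Equiv.swap q.1 q.2).prod ∧
        ∀ e : Fin n × Fin n, (p.zip p.tail).getLast? = some e →
          (l.map fun q => φ q.1 q.2).sum = 2 * pathWt φ p - φ e.1 e.2 := by
  refine ⟨?_, fun p ⟨ha, hb, hc⟩ _ => ?_⟩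
  · have hne : {w | ∃ p, IsPath p a b ∧ pathWt φ p = w}.Nonempty :=
      ⟨_, [a, b], ⟨rfl, rfl, List.isChain_pair.mpr hab⟩, rfl⟩
    have : wTrans φ (swap a b) 1 / 2 ≤ minPathWt φ a b := le_csInf hne fun _ ⟨p, hp, hw⟩ =>
      hw ▸ by linarith [wTrans_swap_le_two_mul_pathWt hφ0 hp hab]
    linarith
  · obtain ⟨l, hl, hprod⟩ := exists_perm_prod_map_swap_eq_swap p hab ha hb hc
    refine ⟨l, fun q hq => Or.inl ?_, ?_, hprod.symm, fun e he => ?_⟩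
    · exact hl.subset_of_dropLast_append hq
    · simp only [hl.length_eq, List.length_append, List.length_dropLast, List.length_zip,
        List.length_tail]
      omega
    · have := hl.sum_map_add_eq he fun q => φ q.1 q.2
      unfold pathWt
      linarith

theorem stmt12 (n : ℕ) (φ : Fin n → Fin n → ℝ)
    (hφ0 : ∀ a b, 0 ≤ φ a b) (hsymm : ∀ a b, φ a b = φ b a)
    (a b : Fin n) (hab : a ≠ b) :
    wTrans φ (Equiv.swap a b) 1 ≤ 2 * minPathWt φ a b ∧
    ∀ p : List (Fin n), IsPath p a b → 2 ≤ p.length →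
      ∃ l : List (Fin n × Fin n),
        (∀ q ∈ l, q ∈ p.zip p.tail ∨ (q.2, q.1) ∈ p.zip p.tail) ∧
        l.length = 2 * (p.length - 1) - 1 ∧
        Equiv.swap a b = (l.map fun q => Equiv.swap q.1 q.2).prod ∧
        ∀ e : Fin n × Fin n, (p.zip p.tail).getLast? = some e →
          (l.map fun q => φ q.1 q.2).sum = 2 * pathWt φ p - φ e.1 e.2 :=
  stmt12_general n φ hφ0 a b hab
end

section
/- For any nonnegative weight function φ on transpositions and permutations π, σ ∈ S_n: (1/2)·D_φ(π,σ) ≤ d_φ(π,σ) ≤ 2·D_φ(π,σ), where D_φ(π,σ) = Σ_{i=1}^{n} wt(p*_φ(π⁻¹(i), σ⁻¹(i))) and p*_φ(a,b) is a minimum-weight path from a to b in the complete weighted graph K_φ with edge weights φ((i j)). -/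
open Equiv Finset

/-!
Both distances depend only on `μ = π⁻¹ * σ`, and `D_φ` becomes the footrule
`∑ⱼ wt p*(μ j, j)`. Composing with a transposition `(a b)` moves two entries, each along the
edge `ab`, so the footrule grows by at most `2 φ(a b)` per transposition: this is the lower
bound. Conversely, along a path `a = v₀, …, v_k = b` the transposition `(a b)` is the conjugate
`(v₀ v₁) ⋯ (v_{k-2} v_{k-1}) (v_{k-1} v_k) (v_{k-2} v_{k-1}) ⋯ (v₀ v₁)`, of weight at most twice
that of the path. Sorting `μ` by repeatedly applying `(a c)` with `a = μ y`, `c = μ a` fixes `a`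
at cost at most `2 wt p*(c, a)`, while the footrule drops by
`wt p*(c, a) + wt p*(a, y) - wt p*(c, y)`; the defect telescopes along the cycle of `y`.
-/

section SwapCost

variable {α : Type*} {φ : α → α → ℝ}

def wordWt (φ : α → α → ℝ) (l : List (α × α)) : ℝ :=
  (l.map fun p => φ p.1 p.2).sum

theorem wordWt_append (l l' : List (α × α)) : wordWt φ (l ++ l') = wordWt φ l + wordWt φ l' := by
  simp [wordWt]

theorem wordWt_nonneg (hφ : ∀ a b, 0 ≤ φ a b) (l : List (α × α)) : 0 ≤ wordWt φ l :=
  List.sum_nonneg fun _ hx => by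
    obtain ⟨p, -, rfl⟩ := List.mem_map.mp hx
    exact hφ _ _

variable [DecidableEq α]

def IsSwapWord (l : List (α × α)) (μ : Perm α) : Prop :=
  (∀ p ∈ l, p.1 ≠ p.2) ∧ (l.map fun p => swap p.1 p.2).prod = μ

noncomputable def swapCost (φ : α → α → ℝ) (μ : Perm α) : ℝ :=
  sInf {w | ∃ l, IsSwapWord l μ ∧ wordWt φ l = w}

theorem isSwapWord_nil : IsSwapWord ([] : List (α × α)) 1 :=
  ⟨by simp, rfl⟩

theorem isSwapWord_singleton {a b : α} (hab : a ≠ b) : IsSwapWord [(a, b)] (swap a b) :=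
  ⟨by simpa using hab, by simp⟩

theorem IsSwapWord.append {l l' : List (α × α)} {μ ν : Perm α} (hl : IsSwapWord l μ)
    (hl' : IsSwapWord l' ν) : IsSwapWord (l ++ l') (μ * ν) :=
  ⟨fun p hp => (List.mem_append.mp hp).elim (hl.1 p) (hl'.1 p), by simp [hl.2, hl'.2]⟩

theorem exists_isSwapWord [Finite α] (μ : Perm α) : ∃ l, IsSwapWord l μ := by
  induction μ using Perm.swap_induction_on with
  | one => exact ⟨[], isSwapWord_nil⟩
  | swap_mul μ a b hab ih =>
    obtain ⟨l, hl⟩ := ih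
    exact ⟨_, (isSwapWord_singleton hab).append hl⟩

theorem swapCost_le (hφ : ∀ a b, 0 ≤ φ a b) {l : List (α × α)} {μ : Perm α}
    (hl : IsSwapWord l μ) : swapCost φ μ ≤ wordWt φ l :=
  csInf_le ⟨0, by rintro _ ⟨l, -, rfl⟩; exact wordWt_nonneg hφ l⟩ ⟨l, hl, rfl⟩

theorem le_swapCost [Finite α] {μ : Perm α} {c : ℝ}
    (h : ∀ l, IsSwapWord l μ → c ≤ wordWt φ l) : c ≤ swapCost φ μ := by
  obtain ⟨l, hl⟩ := exists_isSwapWord μ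
  exact le_csInf ⟨_, l, hl, rfl⟩ (by rintro _ ⟨l, hl, rfl⟩; exact h l hl)

theorem swapCost_swap_le (hφ : ∀ a b, 0 ≤ φ a b) {a b : α} (hab : a ≠ b) :
    swapCost φ (swap a b) ≤ φ a b := by
  simpa [wordWt] using swapCost_le hφ (isSwapWord_singleton hab)

theorem swapCost_mul_le [Finite α] (hφ : ∀ a b, 0 ≤ φ a b) (μ ν : Perm α) :
    swapCost φ (μ * ν) ≤ swapCost φ μ + swapCost φ ν := by
  have key : ∀ l, IsSwapWord l μ → swapCost φ (μ * ν) - wordWt φ l ≤ swapCost φ ν :=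
    fun l hl => le_swapCost fun l' hl' => by
      linarith [swapCost_le hφ (hl.append hl'), wordWt_append (φ := φ) l l']
  have : swapCost φ (μ * ν) - swapCost φ ν ≤ swapCost φ μ :=
    le_swapCost fun l hl => by linarith [key l hl]
  linarith

end SwapCost

section Paths

variable {n : ℕ} {φ : Fin n → Fin n → ℝ}

theorem isPath_cons_cons_iff {x v a b : Fin n} {p : List (Fin n)} :
    IsPath (x :: v :: p) a b ↔ x = a ∧ x ≠ v ∧ IsPath (v :: p) v b := by
  simp only [IsPath, List.head?_cons, Option.some.injEq, List.getLast?_cons_cons, true_and]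
  change _ ∧ _ ∧ List.IsChain _ _ ↔ _ ∧ _ ∧ _ ∧ List.IsChain _ _
  rw [List.isChain_cons_cons]
  tauto

theorem isPath_singleton_iff {x a b : Fin n} : IsPath [x] a b ↔ x = a ∧ x = b := by
  simp only [IsPath, List.head?_cons, List.getLast?_singleton, Option.some.injEq]
  exact ⟨fun h => ⟨h.1, h.2.1⟩, fun h => ⟨h.1, h.2, List.isChain_singleton x⟩⟩

theorem IsPath.cons_eq {p : List (Fin n)} {b c : Fin n} (hp : IsPath p b c) :
    ∃ q, p = b :: q := by
  obtain ⟨v, q, rfl⟩ := List.exists_cons_of_ne_nil (l := p) (by rintro rfl; simp [IsPath] at hp)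
  obtain rfl : v = b := by simpa [IsPath] using hp.1
  exact ⟨q, rfl⟩

theorem IsPath.cons {p : List (Fin n)} {a b c : Fin n} (hp : IsPath p b c) (hab : a ≠ b) :
    IsPath (a :: p) a c := by
  obtain ⟨q, rfl⟩ := hp.cons_eq
  exact isPath_cons_cons_iff.mpr ⟨rfl, hab, hp⟩

theorem IsPath.pathWt_cons {p : List (Fin n)} {b c : Fin n} (hp : IsPath p b c) (a : Fin n) :
    pathWt φ (a :: p) = φ a b + pathWt φ p := by
  obtain ⟨q, rfl⟩ := hp.cons_eq
  rfl

theorem exists_isPath (a b : Fin n) : ∃ p, IsPath p a b := by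
  by_cases hab : a = b
  · exact ⟨[a], isPath_singleton_iff.mpr ⟨rfl, hab⟩⟩
  · exact ⟨_, (isPath_singleton_iff.mpr ⟨rfl, rfl⟩).cons hab⟩

theorem pathWt_nonneg (hφ : ∀ a b, 0 ≤ φ a b) (p : List (Fin n)) : 0 ≤ pathWt φ p :=
  List.sum_nonneg fun _ hx => by
    obtain ⟨q, -, rfl⟩ := List.mem_map.mp hx
    exact hφ _ _

theorem minPathWt_le_pathWt (hφ : ∀ a b, 0 ≤ φ a b) {p : List (Fin n)} {a b : Fin n}
    (hp : IsPath p a b) : minPathWt φ a b ≤ pathWt φ p :=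
  csInf_le ⟨0, by rintro _ ⟨p, -, rfl⟩; exact pathWt_nonneg hφ p⟩ ⟨p, hp, rfl⟩

theorem le_minPathWt {a b : Fin n} {c : ℝ} (h : ∀ p, IsPath p a b → c ≤ pathWt φ p) :
    c ≤ minPathWt φ a b := by
  obtain ⟨p, hp⟩ := exists_isPath a b
  exact le_csInf ⟨_, p, hp, rfl⟩ (by rintro _ ⟨p, hp, rfl⟩; exact h p hp)

theorem minPathWt_nonneg (hφ : ∀ a b, 0 ≤ φ a b) (a b : Fin n) : 0 ≤ minPathWt φ a b :=
  le_minPathWt fun p _ => pathWt_nonneg hφ p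

theorem minPathWt_self (hφ : ∀ a b, 0 ≤ φ a b) (a : Fin n) : minPathWt φ a a = 0 :=
  le_antisymm (minPathWt_le_pathWt hφ (isPath_singleton_iff.mpr ⟨rfl, rfl⟩))
    (minPathWt_nonneg hφ a a)

theorem minPathWt_le_add (hφ : ∀ a b, 0 ≤ φ a b) {a b : Fin n} (hab : a ≠ b) (c : Fin n) :
    minPathWt φ a c ≤ φ a b + minPathWt φ b c := by
  have : minPathWt φ a c - φ a b ≤ minPathWt φ b c := le_minPathWt fun p hp => by
    linarith [minPathWt_le_pathWt hφ (hp.cons hab), hp.pathWt_cons (φ := φ) a]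
  linarith

theorem swapCost_swap_le_two_mul_pathWt (hφ : ∀ a b, 0 ≤ φ a b) :
    ∀ {p : List (Fin n)} {a b : Fin n}, IsPath p a b → a ≠ b →
      swapCost φ (swap a b) ≤ 2 * pathWt φ p
  | [], _, _, hp, _ => by simp [IsPath] at hp
  | [_], _, _, hp, hab => absurd ((isPath_singleton_iff.mp hp).1.symm.trans
      (isPath_singleton_iff.mp hp).2) hab
  | x :: v :: p, a, b, hp, hab => by
    obtain ⟨rfl, hxv, hvp⟩ := isPath_cons_cons_iff.mp hp
    have hwt : pathWt φ (x :: v :: p) = φ x v + pathWt φ (v :: p) := rfl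
    have hrest := pathWt_nonneg hφ (v :: p)
    have hedge := swapCost_swap_le hφ hxv
    by_cases hvb : v = b
    · subst hvb
      linarith [hφ x v]
    · have hconj : swap x b = swap x v * swap v b * swap x v := by
        rw [swap_comm x v, swap_comm v b]
        exact (swap_mul_swap_mul_swap (Ne.symm hvb) (Ne.symm hab)).symm
      have ih := swapCost_swap_le_two_mul_pathWt hφ hvp hvb
      rw [hconj]
      linarith [swapCost_mul_le hφ (swap x v * swap v b) (swap x v),
        swapCost_mul_le hφ (swap x v) (swap v b)]

theorem swapCost_swap_le_two_mul_minPathWt (hφ : ∀ a b, 0 ≤ φ a b) {a b : Fin n}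
    (hab : a ≠ b) : swapCost φ (swap a b) ≤ 2 * minPathWt φ a b := by
  have : swapCost φ (swap a b) / 2 ≤ minPathWt φ a b := le_minPathWt fun p hp => by
    linarith [swapCost_swap_le_two_mul_pathWt hφ hp hab]
  linarith

end Paths

section Footrule

variable {n : ℕ} {φ : Fin n → Fin n → ℝ}

noncomputable def footrule (φ : Fin n → Fin n → ℝ) (μ : Perm (Fin n)) : ℝ :=
  ∑ j, minPathWt φ (μ j) j

theorem DTrans_eq_footrule (π σ : Perm (Fin n)) : DTrans φ π σ = footrule φ (π⁻¹ * σ) := by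
  rw [DTrans, footrule, ← Equiv.sum_comp σ]
  simp

theorem wTrans_eq_swapCost (π σ : Perm (Fin n)) : wTrans φ π σ = swapCost φ (π⁻¹ * σ) := by
  simp only [wTrans, swapCost, IsSwapWord, wordWt, eq_inv_mul_iff_mul_eq, eq_comm (a := σ),
    and_assoc]

theorem footrule_one (hφ : ∀ a b, 0 ≤ φ a b) : footrule φ 1 = 0 := by
  simp [footrule, minPathWt_self hφ]

theorem footrule_swap_mul_le (hφ : ∀ a b, 0 ≤ φ a b) (hsymm : ∀ a b, φ a b = φ b a)
    {a b : Fin n} (hab : a ≠ b) (μ : Perm (Fin n)) :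
    footrule φ (swap a b * μ) ≤ footrule φ μ + 2 * φ a b := by
  have hdiff : footrule φ (swap a b * μ) - footrule φ μ =
      (minPathWt φ b (μ⁻¹ a) - minPathWt φ a (μ⁻¹ a)) +
        (minPathWt φ a (μ⁻¹ b) - minPathWt φ b (μ⁻¹ b)) := by
    rw [footrule, footrule, ← Finset.sum_sub_distrib,
      Fintype.sum_eq_add (μ⁻¹ a) (μ⁻¹ b) (by simpa using hab)]
    · simp
    · rintro j ⟨hja, hjb⟩
      rw [Perm.mul_apply, swap_apply_of_ne_of_ne (by rintro rfl; simp at hja)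
        (by rintro rfl; simp at hjb), sub_self]
  have hba := minPathWt_le_add hφ (Ne.symm hab) (μ⁻¹ a)
  have hab' := minPathWt_le_add hφ hab (μ⁻¹ b)
  linarith [hsymm b a]

theorem footrule_le_two_mul_wordWt (hφ : ∀ a b, 0 ≤ φ a b) (hsymm : ∀ a b, φ a b = φ b a) :
    ∀ {l : List (Fin n × Fin n)} {μ : Perm (Fin n)}, IsSwapWord l μ →
      footrule φ μ ≤ 2 * wordWt φ l
  | [], μ, hl => by
    rw [← hl.2]
    simp [footrule_one hφ, wordWt]
  | (a, b) :: l, μ, hl => by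
    have hab : a ≠ b := hl.1 (a, b) List.mem_cons_self
    have hl' : IsSwapWord l (l.map fun p => swap p.1 p.2).prod :=
      ⟨fun p hp => hl.1 p (List.mem_cons_of_mem _ hp), rfl⟩
    have hwt : wordWt φ ((a, b) :: l) = φ a b + wordWt φ l := by simp [wordWt]
    rw [← hl.2, List.map_cons, List.prod_cons]
    linarith [footrule_swap_mul_le hφ hsymm hab (l.map fun p => swap p.1 p.2).prod,
      footrule_le_two_mul_wordWt hφ hsymm hl']

theorem footrule_le_two_mul_swapCost (hφ : ∀ a b, 0 ≤ φ a b) (hsymm : ∀ a b, φ a b = φ b a)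
    (μ : Perm (Fin n)) : footrule φ μ ≤ 2 * swapCost φ μ := by
  have : footrule φ μ / 2 ≤ swapCost φ μ := le_swapCost fun l hl => by
    linarith [footrule_le_two_mul_wordWt hφ hsymm hl]
  linarith

theorem footrule_swap_mul_add {μ : Perm (Fin n)} {y a c : Fin n} (hφ : ∀ a b, 0 ≤ φ a b)
    (ha : μ y = a) (hc : μ a = c) (hya : y ≠ a) :
    footrule φ (swap a c * μ) + minPathWt φ a y + minPathWt φ c a =
      footrule φ μ + minPathWt φ c y := by
  have hdiff : footrule φ (swap a c * μ) - footrule φ μ =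
      (minPathWt φ c y - minPathWt φ a y) + (minPathWt φ a a - minPathWt φ c a) := by
    rw [footrule, footrule, ← Finset.sum_sub_distrib, Fintype.sum_eq_add y a hya]
    · simp [ha, hc]
    · rintro j ⟨hjy, hja⟩
      rw [Perm.mul_apply, swap_apply_of_ne_of_ne (by rwa [← ha, μ.injective.ne_iff])
        (by rwa [← hc, μ.injective.ne_iff]), sub_self]
  linarith [minPathWt_self hφ a]

theorem swapCost_le_two_mul_footrule_of_moved (hφ : ∀ a b, 0 ≤ φ a b) {μ : Perm (Fin n)}
    (h : ∀ y, μ y ≠ y → swapCost φ μ ≤ 2 * (footrule φ μ - minPathWt φ (μ y) y)) :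
    swapCost φ μ ≤ 2 * footrule φ μ := by
  by_cases hμ : μ = 1
  · subst hμ
    rw [footrule_one hφ, mul_zero]
    simpa [wordWt] using swapCost_le (φ := φ) hφ isSwapWord_nil
  · obtain ⟨y, hy⟩ : ∃ y, μ y ≠ y := by
      by_contra! hfix
      exact hμ (Equiv.ext hfix)
    linarith [h y hy, minPathWt_nonneg hφ (μ y) y]

/-- The correction `wt p*(μ y, y)` is what makes the induction close up at the end of a cycle. -/
theorem swapCost_le_two_mul_footrule_sub (hφ : ∀ a b, 0 ≤ φ a b) (μ : Perm (Fin n)) :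
    ∀ y, μ y ≠ y → swapCost φ μ ≤ 2 * (footrule φ μ - minPathWt φ (μ y) y) := by
  induction hk : (μ.support).card using Nat.strong_induction_on generalizing μ with
  | _ k ih =>
    intro y hy
    set a := μ y with ha
    set c := μ a with hc
    have hya : y ≠ a := Ne.symm hy
    have hca : c ≠ a := fun h => hya (μ.injective (by rw [← ha, ← hc, h]))
    set μ' := swap a c * μ with hμ'
    have ih' := fun y' => ih _ (hk ▸ Perm.card_support_swap_mul hca) μ' rfl y'
    have hμ'y : μ' y = c := by simp [hμ', ← ha]
    have hcost' : swapCost φ μ' ≤ 2 * (footrule φ μ' - minPathWt φ c y) := by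
      by_cases hcy : c = y
      · rw [hcy, minPathWt_self hφ, sub_zero]
        exact swapCost_le_two_mul_footrule_of_moved hφ ih'
      · exact hμ'y ▸ ih' y (hμ'y ▸ hcy)
    have hcost : swapCost φ μ ≤ swapCost φ (swap a c) + swapCost φ μ' := by
      simpa [hμ'] using swapCost_mul_le hφ (swap a c) μ'
    have hswap : swapCost φ (swap a c) ≤ 2 * minPathWt φ c a :=
      swap_comm c a ▸ swapCost_swap_le_two_mul_minPathWt hφ hca
    linarith [footrule_swap_mul_add (φ := φ) hφ ha.symm hc.symm hya]

theorem swapCost_le_two_mul_footrule (hφ : ∀ a b, 0 ≤ φ a b) (μ : Perm (Fin n)) :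
    swapCost φ μ ≤ 2 * footrule φ μ :=
  swapCost_le_two_mul_footrule_of_moved hφ (swapCost_le_two_mul_footrule_sub hφ μ)

end Footrule

theorem stmt14 (n : ℕ) (φ : Fin n → Fin n → ℝ)
    (hφ0 : ∀ a b, 0 ≤ φ a b) (hsymm : ∀ a b, φ a b = φ b a)
    (π σ : Equiv.Perm (Fin n)) :
    (1 / 2) * DTrans φ π σ ≤ wTrans φ π σ ∧ wTrans φ π σ ≤ 2 * DTrans φ π σ := by
  rw [wTrans_eq_swapCost, DTrans_eq_footrule]
  exact ⟨by linarith [footrule_le_two_mul_swapCost hφ0 hsymm (π⁻¹ * σ)],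
    swapCost_le_two_mul_footrule hφ0 (π⁻¹ * σ)⟩
end

section
/- If φ is a metric weight function on transpositions, then for all π, σ ∈ S_n, d_φ(π,σ) ≤ D_φ(π,σ), where D_φ(π,σ) = Σ_i wt(p*_φ(π⁻¹(i), σ⁻¹(i))). -/
/-!
Write `ρ = σ⁻¹ π`, which sends `π⁻¹ i` to `σ⁻¹ i`. Splitting off the transposition
`(a ρa)` gives `ρ = (a ρa) ρ'`, where `ρ'` fixes `a` and sends `ρ⁻¹ a` straight to `ρ a`;
iterating along each cycle `a₀ ↦ a₁ ↦ ⋯ ↦ a₀` of `ρ` writes it as the transpositions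
`(a₀ a₁), (a₁ a₂), …` of total weight at most `∑ₓ φ(x, ρ x)`. Each term `φ(π⁻¹ i, σ⁻¹ i)`
of that sum is at most the weight of any path from `π⁻¹ i` to `σ⁻¹ i`, by the triangle
inequality.
-/

open Equiv Finset

section SwapDecomposition

variable {α : Type*} {φ : α → α → ℝ}

def swapsWt (φ : α → α → ℝ) (l : List (α × α)) : ℝ := (l.map fun p => φ p.1 p.2).sum

theorem swapsWt_nonneg (hφ0 : ∀ a b, 0 ≤ φ a b) (l : List (α × α)) : 0 ≤ swapsWt φ l :=
  List.sum_nonneg <| by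
    simp only [List.mem_map]
    rintro _ ⟨p, -, rfl⟩
    exact hφ0 _ _

theorem swapsWt_reverse (l : List (α × α)) : swapsWt φ l.reverse = swapsWt φ l := by
  simp [swapsWt, List.sum_reverse]

variable [DecidableEq α]

def moveWt (φ : α → α → ℝ) (x y : α) : ℝ := if x = y then 0 else φ x y

def displacementWt [Fintype α] (φ : α → α → ℝ) (ρ : Perm α) : ℝ := ∑ x, moveWt φ x (ρ x)

def IsSwapDecomp (ρ : Perm α) (l : List (α × α)) : Prop :=
  (∀ p ∈ l, p.1 ≠ p.2) ∧ (l.map fun p => swap p.1 p.2).prod = ρ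

theorem moveWt_self (x : α) : moveWt φ x x = 0 := if_pos rfl

theorem moveWt_nonneg (hφ0 : ∀ a b, 0 ≤ φ a b) (x y : α) : 0 ≤ moveWt φ x y := by
  unfold moveWt; split_ifs <;> simp [hφ0]

theorem moveWt_of_ne {x y : α} (h : x ≠ y) : moveWt φ x y = φ x y := if_neg h

theorem moveWt_le_add (hφ0 : ∀ a b, 0 ≤ φ a b)
    (hmetric : ∀ a b c : α, a ≠ b → b ≠ c → a ≠ c → φ a b ≤ φ a c + φ c b)
    {x y : α} (hxy : x ≠ y) (z : α) : moveWt φ x z ≤ φ x y + moveWt φ y z := by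
  by_cases hxz : x = z
  · rw [hxz, moveWt_self]
    exact add_nonneg (hφ0 _ _) (moveWt_nonneg hφ0 _ _)
  by_cases hyz : y = z
  · rw [hyz, moveWt_self, moveWt_of_ne hxz, add_zero]
  rw [moveWt_of_ne hxz, moveWt_of_ne hyz]
  exact hmetric x z y hxz (Ne.symm hyz) hxy

theorem IsSwapDecomp.nil : IsSwapDecomp (1 : Perm α) [] := by simp [IsSwapDecomp]

theorem IsSwapDecomp.cons {ρ : Perm α} {l : List (α × α)} (hl : IsSwapDecomp ρ l) {a b : α}
    (hab : a ≠ b) : IsSwapDecomp (swap a b * ρ) ((a, b) :: l) :=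
  ⟨List.forall_mem_cons.mpr ⟨hab, hl.1⟩, by simp [hl.2]⟩

theorem IsSwapDecomp.reverse {ρ : Perm α} {l : List (α × α)} (hl : IsSwapDecomp ρ l) :
    IsSwapDecomp ρ⁻¹ l.reverse := by
  refine ⟨by simpa using hl.1, ?_⟩
  rw [← hl.2, List.prod_inv_reverse, List.map_reverse, List.map_map]
  simp [Function.comp_def, swap_inv]

variable [Fintype α]

theorem displacementWt_swap_mul {ρ : Perm α} {a : α} (ha : ρ a ≠ a) :
    displacementWt φ (swap a (ρ a) * ρ) + φ a (ρ a) + φ (ρ⁻¹ a) a =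
      displacementWt φ ρ + moveWt φ (ρ⁻¹ a) (ρ a) := by
  set b := ρ⁻¹ a
  have hρb : ρ b = a := by simp [b]
  have hba : b ≠ a := fun h => ha (by rw [← h, hρb, h])
  have hrest : ∀ x ∈ univ \ {a, b},
      moveWt φ x ((swap a (ρ a) * ρ) x) = moveWt φ x (ρ x) := by
    intro x hx
    simp only [mem_sdiff, mem_univ, mem_insert, mem_singleton, true_and, not_or] at hx
    rw [Perm.mul_apply, swap_apply_of_ne_of_ne]
    · exact fun h => hx.2 (ρ.injective (h.trans hρb.symm))
    · exact fun h => hx.1 (ρ.injective h)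
  unfold displacementWt
  rw [← sum_sdiff (subset_univ {a, b}), ← sum_sdiff (subset_univ {a, b}),
    sum_congr rfl hrest, sum_pair hba.symm, sum_pair hba.symm]
  simp only [Perm.mul_apply, hρb, swap_apply_right, swap_apply_left, moveWt_self,
    moveWt_of_ne ha.symm, moveWt_of_ne hba]
  ring

/-- The slack `moveWt φ (ρ⁻¹ a) a` is the closing edge `(ρ⁻¹ a, a)` of the cycle through `a`,
which the decomposition never pays for; without it the induction does not close. -/
theorem exists_isSwapDecomp_add_moveWt_le (hφ0 : ∀ a b, 0 ≤ φ a b) (ρ : Perm α) (a : α) :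
    ∃ l, IsSwapDecomp ρ l ∧ swapsWt φ l + moveWt φ (ρ⁻¹ a) a ≤ displacementWt φ ρ := by
  have step : ∀ x, ρ x ≠ x →
      ∃ l, IsSwapDecomp ρ l ∧ swapsWt φ l + moveWt φ (ρ⁻¹ x) x ≤ displacementWt φ ρ := by
    intro x hx
    obtain ⟨l, hl, hwt⟩ :=
      exists_isSwapDecomp_add_moveWt_le hφ0 (swap x (ρ x) * ρ) (ρ x)
    refine ⟨(x, ρ x) :: l, by simpa using hl.cons hx.symm, ?_⟩
    have hpre : (swap x (ρ x) * ρ)⁻¹ (ρ x) = ρ⁻¹ x := by simp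
    rw [hpre] at hwt
    have hsplit := displacementWt_swap_mul (φ := φ) hx
    rw [moveWt_of_ne fun h => hx (Perm.inv_eq_iff_eq.mp h).symm]
    simp only [swapsWt, List.map_cons, List.sum_cons] at hwt ⊢
    linarith
  by_cases ha : ρ a = a
  · have hfix : moveWt φ (ρ⁻¹ a) a = 0 := by rw [Perm.inv_eq_iff_eq.mpr ha.symm, moveWt_self]
    rcases eq_or_ne ρ 1 with rfl | hρ
    · exact ⟨[], IsSwapDecomp.nil, by simp [swapsWt, displacementWt, moveWt]⟩
    obtain ⟨b, hb⟩ : ∃ b, ρ b ≠ b := by simpa [Perm.ext_iff] using hρ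
    obtain ⟨l, hl, hwt⟩ := step b hb
    exact ⟨l, hl, by linarith [moveWt_nonneg hφ0 (ρ⁻¹ b) b]⟩
  · exact step a ha
termination_by ρ.support.card
decreasing_by exact Perm.card_support_swap_mul ‹_›

theorem exists_isSwapDecomp_swapsWt_le (hφ0 : ∀ a b, 0 ≤ φ a b) (ρ : Perm α) :
    ∃ l, IsSwapDecomp ρ l ∧ swapsWt φ l ≤ displacementWt φ ρ := by
  rcases isEmpty_or_nonempty α with hα | ⟨⟨a⟩⟩
  · exact ⟨[], by simpa [Subsingleton.elim ρ 1] using IsSwapDecomp.nil, by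
      simp [swapsWt, displacementWt]⟩
  obtain ⟨l, hl, hwt⟩ := exists_isSwapDecomp_add_moveWt_le hφ0 ρ a
  exact ⟨l, hl, by linarith [moveWt_nonneg hφ0 (ρ⁻¹ a) a]⟩

theorem displacementWt_inv_mul (π σ : Perm α) :
    displacementWt φ (σ⁻¹ * π) = ∑ i, moveWt φ (π⁻¹ i) (σ⁻¹ i) := by
  rw [displacementWt, ← Equiv.sum_comp π⁻¹]
  simp

end SwapDecomposition

section FinPaths

variable {n : ℕ} {φ : Fin n → Fin n → ℝ}

theorem wTrans_le_swapsWt (hφ0 : ∀ a b, 0 ≤ φ a b) {π σ : Perm (Fin n)}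
    {l : List (Fin n × Fin n)} (hl : IsSwapDecomp (π⁻¹ * σ) l) :
    wTrans φ π σ ≤ swapsWt φ l := by
  refine csInf_le ⟨0, ?_⟩ ⟨l, hl.1, by rw [hl.2, mul_inv_cancel_left], rfl⟩
  rintro w ⟨l', -, -, rfl⟩
  exact swapsWt_nonneg hφ0 l'

theorem pathWt_cons_cons (x y : Fin n) (t : List (Fin n)) :
    pathWt φ (x :: y :: t) = φ x y + pathWt φ (y :: t) := by
  simp [pathWt]

theorem moveWt_le_pathWt (hφ0 : ∀ a b, 0 ≤ φ a b)
    (hmetric : ∀ a b c : Fin n, a ≠ b → b ≠ c → a ≠ c → φ a b ≤ φ a c + φ c b) :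
    ∀ {p : List (Fin n)} {a b : Fin n}, IsPath p a b → moveWt φ a b ≤ pathWt φ p
  | [], _, _, ⟨h, _⟩ => by simp at h
  | [x], a, b, ⟨ha, hb, _⟩ => by
    obtain ⟨rfl, rfl⟩ : x = a ∧ x = b := by simp_all
    simp [moveWt, pathWt]
  | x :: y :: t, a, b, ⟨ha, hb, hchain⟩ => by
    obtain rfl : x = a := by simpa using ha
    have htail : IsPath (y :: t) y b := ⟨rfl, by simpa using hb, hchain.tail⟩
    rw [pathWt_cons_cons]
    calc moveWt φ x b ≤ φ x y + moveWt φ y b :=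
          moveWt_le_add hφ0 hmetric (List.isChain_cons_cons.mp hchain).1 b
      _ ≤ φ x y + pathWt φ (y :: t) := by
          gcongr; exact moveWt_le_pathWt hφ0 hmetric htail

theorem moveWt_le_minPathWt (hφ0 : ∀ a b, 0 ≤ φ a b)
    (hmetric : ∀ a b c : Fin n, a ≠ b → b ≠ c → a ≠ c → φ a b ≤ φ a c + φ c b) (a b : Fin n) :
    moveWt φ a b ≤ minPathWt φ a b := by
  have hpath : ∃ p, IsPath p a b := by
    rcases eq_or_ne a b with rfl | hab
    · exact ⟨[a], rfl, rfl, List.isChain_singleton _⟩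
    · exact ⟨[a, b], rfl, rfl, List.isChain_pair.mpr hab⟩
  obtain ⟨p, hp⟩ := hpath
  refine le_csInf ⟨_, p, hp, rfl⟩ ?_
  rintro w ⟨q, hq, rfl⟩
  exact moveWt_le_pathWt hφ0 hmetric hq

end FinPaths

theorem stmt15_general (n : ℕ) (φ : Fin n → Fin n → ℝ)
    (hφ0 : ∀ a b, 0 ≤ φ a b)
    (hmetric : ∀ a b c : Fin n, a ≠ b → b ≠ c → a ≠ c → φ a b ≤ φ a c + φ c b)
    (π σ : Equiv.Perm (Fin n)) :
    wTrans φ π σ ≤ DTrans φ π σ := by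
  obtain ⟨l, hl, hwt⟩ := exists_isSwapDecomp_swapsWt_le hφ0 (σ⁻¹ * π)
  have hrev : IsSwapDecomp (π⁻¹ * σ) l.reverse := by simpa using hl.reverse
  calc wTrans φ π σ ≤ swapsWt φ l.reverse := wTrans_le_swapsWt hφ0 hrev
    _ = swapsWt φ l := swapsWt_reverse l
    _ ≤ displacementWt φ (σ⁻¹ * π) := hwt
    _ = ∑ i, moveWt φ (π⁻¹ i) (σ⁻¹ i) := displacementWt_inv_mul π σ
    _ ≤ DTrans φ π σ := sum_le_sum fun i _ => moveWt_le_minPathWt hφ0 hmetric _ _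

theorem stmt15 (n : ℕ) (φ : Fin n → Fin n → ℝ)
    (hφ0 : ∀ a b, 0 ≤ φ a b) (hsymm : ∀ a b, φ a b = φ b a)
    (hmetric : ∀ a b c : Fin n, a ≠ b → b ≠ c → a ≠ c → φ a b ≤ φ a c + φ c b)
    (π σ : Equiv.Perm (Fin n)) :
    wTrans φ π σ ≤ DTrans φ π σ :=
  stmt15_general n φ hφ0 hmetric π σ
end

section
/- For a metric-path weight function φ (arising from a weighted path graph on [n] where φ((a b)) is the sum of edge weights on the path between a and b), the weighted transposition distance satisfies exactly d_φ(π,σ) = (1/2)·D_φ(π,σ) for all π, σ ∈ S_n, where D_φ(π,σ) = Σ_i φ((π⁻¹(i), σ⁻¹(i))) (terms with π⁻¹(i) = σ⁻¹(i) counted as 0). -/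
open Equiv Finset

/-!
Put `S m = ∑ h < m, w h`. For `w ≥ 0` the cost `wsum w k l = |S l - S k|` is a pseudometric on
positions, so `D = DKendall w` is a pseudometric on permutations, and `D π (π * swap a b)` is
`2 * wsum w a b`, as only the positions `a` and `b` move. By the triangle inequality every sequence
of transpositions from `π` to `σ` therefore costs at least `D π σ / 2`.

Conversely, if `π ≠ σ` then `g = σ⁻¹ * π` has a crossing pair `a < b` with `g b ≤ a < b ≤ g a`.
Because costs are additive along the line, the transposition of `a` and `b` lowers `D · σ` by
exactly `2 * wsum w a b`; repeating this (the forward displacement of `g` drops each time) reaches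
`σ` at total cost exactly `D π σ / 2`.
-/

section wsum

variable (w : ℕ → ℝ)

lemma wsum_comm (k l : ℕ) : wsum w k l = wsum w l k := by
  rw [wsum, wsum, min_comm, max_comm]

lemma wsum_self (k : ℕ) : wsum w k k = 0 := by
  simp [wsum]

lemma wsum_of_le {k l : ℕ} (h : k ≤ l) :
    wsum w k l = ∑ i ∈ range l, w i - ∑ i ∈ range k, w i := by
  rw [wsum, min_eq_left h, max_eq_right h, sum_Ico_eq_sub _ h]

variable {w}

lemma wsum_eq_abs_sub (hw : ∀ i, 0 ≤ w i) (k l : ℕ) :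
    wsum w k l = |∑ i ∈ range l, w i - ∑ i ∈ range k, w i| := by
  wlog h : k ≤ l generalizing k l
  · rw [wsum_comm, this l k (by omega), abs_sub_comm]
  have h0 : 0 ≤ wsum w k l := sum_nonneg fun i _ => hw i
  rw [← wsum_of_le w h, abs_of_nonneg h0]

lemma wsum_triangle (hw : ∀ i, 0 ≤ w i) (x y z : ℕ) :
    wsum w x y ≤ wsum w x z + wsum w z y := by
  simp only [wsum_eq_abs_sub hw]
  linarith [abs_sub_le (∑ i ∈ range y, w i) (∑ i ∈ range z, w i) (∑ i ∈ range x, w i)]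

end wsum

namespace Equiv.Perm

variable {α : Type*}

lemma eq_one_of_forall_apply_le [LinearOrder α] [WellFoundedLT α] (g : Perm α)
    (h : ∀ p, g p ≤ p) : g = 1 := by
  ext p
  induction p using WellFoundedLT.induction with
  | _ p ih =>
    by_contra hne
    exact hne (g.injective (ih _ ((h p).lt_of_ne hne)))

lemma exists_crossing_pair [Fintype α] [LinearOrder α] (g : Perm α) (hg : g ≠ 1) :
    ∃ a b, a < b ∧ b ≤ g a ∧ g b ≤ a := by
  classical
  obtain ⟨p, hp⟩ : ∃ p, p < g p := by
    by_contra! h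
    exact hg (eq_one_of_forall_apply_le g h)
  obtain ⟨a, ha, ha_max⟩ :=
    (univ.filter fun q => q < g q).exists_max_image id ⟨p, by simpa using hp⟩
  simp only [mem_filter, mem_univ, true_and, id] at ha ha_max
  by_contra! H
  -- Otherwise `g` maps the interval `[a, g a]` injectively into `(a, g a]`, as `a` is maximal
  -- with `a < g a`.
  let I := univ.filter fun q => a < q ∧ q ≤ g a
  have hmaps : Set.MapsTo g (insert a I : Finset α) I := by
    intro q hq
    simp only [coe_insert, Set.mem_insert_iff, mem_coe, I, mem_filter, mem_univ, true_and] at hq ⊢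
    rcases hq with rfl | ⟨haq, hq⟩
    · exact ⟨ha, le_rfl⟩
    · exact ⟨H a q haq hq, (not_lt.mp fun h => (ha_max q h).not_gt haq).trans hq⟩
  have := card_le_card_of_injOn g hmaps g.injective.injOn
  rw [card_insert_of_notMem (by simp [I])] at this
  omega

lemma sum_mul_swap_add {M : Type*} [AddCommMonoid M] [Fintype α] [DecidableEq α]
    (F : α → α → M) (g : Perm α) {a b : α} (hab : a ≠ b) :
    ∑ p, F p ((g * swap a b) p) + (F a (g a) + F b (g b)) =
      ∑ p, F p (g p) + (F a (g b) + F b (g a)) := by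
  have split : ∀ h : Perm α, ∑ p, F p (h p) = ∑ p ∈ {a, b}ᶜ, F p (h p) + (F a (h a) + F b (h b)) :=
    fun h => by rw [← sum_pair (f := fun p => F p (h p)) hab, sum_compl_add_sum]
  have hcompl : ∑ p ∈ {a, b}ᶜ, F p ((g * swap a b) p) = ∑ p ∈ {a, b}ᶜ, F p (g p) := by
    refine sum_congr rfl fun p hp => ?_
    simp only [mem_compl, mem_insert, mem_singleton, not_or] at hp
    rw [mul_apply, swap_apply_of_ne_of_ne hp.1 hp.2]
  rw [split (g * swap a b), split g, hcompl]
  simp only [mul_apply, swap_apply_left, swap_apply_right]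
  abel

end Equiv.Perm

/-- The subtraction is truncated: only points moved forward contribute. -/
def forwardDisp {n : ℕ} (g : Perm (Fin n)) : ℕ :=
  ∑ p, ((g p : ℕ) - p)

section DKendall

variable {n : ℕ} (w : ℕ → ℝ)

lemma DKendall_eq_sum (π σ : Perm (Fin n)) :
    DKendall w π σ = ∑ p : Fin n, wsum w p ((σ⁻¹ * π) p) := by
  rw [DKendall, ← Equiv.sum_comp π]
  simp [Perm.mul_apply]

lemma DKendall_self (π : Perm (Fin n)) : DKendall w π π = 0 := by
  simp [DKendall_eq_sum, wsum_self]

lemma DKendall_mul_swap (π : Perm (Fin n)) (a b : Fin n) :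
    DKendall w π (π * swap a b) = 2 * wsum w a b := by
  rcases eq_or_ne a b with rfl | hab
  · rw [swap_self, ← Perm.one_def, mul_one, DKendall_self, wsum_self, mul_zero]
  rw [DKendall_eq_sum, mul_inv_rev, swap_inv, inv_mul_cancel_right,
    Fintype.sum_eq_add a b hab fun p hp => by rw [swap_apply_of_ne_of_ne hp.1 hp.2, wsum_self],
    swap_apply_left, swap_apply_right, wsum_comm w b]
  ring

lemma DKendall_triangle {w} (hw : ∀ i, 0 ≤ w i) (π τ σ : Perm (Fin n)) :
    DKendall w π σ ≤ DKendall w π τ + DKendall w τ σ := by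
  rw [DKendall, DKendall, DKendall, ← sum_add_distrib]
  exact sum_le_sum fun i _ => wsum_triangle hw _ _ _

lemma DKendall_mul_prod_swap_le {w} (hw : ∀ i, 0 ≤ w i) (π : Perm (Fin n))
    (l : List (Fin n × Fin n)) :
    DKendall w π (π * (l.map fun p => swap p.1 p.2).prod) ≤
      2 * (l.map fun p => wsum w p.1 p.2).sum := by
  induction l generalizing π with
  | nil => simp [DKendall_self]
  | cons x l ih =>
    simp only [List.map_cons, List.prod_cons, List.sum_cons, ← mul_assoc]
    calc _ ≤ DKendall w π (π * swap x.1 x.2) + DKendall w (π * swap x.1 x.2) _ :=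
          DKendall_triangle hw _ _ _
      _ ≤ _ := by rw [DKendall_mul_swap]; linarith [ih (π * swap x.1 x.2)]

lemma DKendall_mul_swap_add {π σ : Perm (Fin n)} {a b : Fin n} (hab : a < b)
    (hba : b ≤ (σ⁻¹ * π) a) (hb : (σ⁻¹ * π) b ≤ a) :
    DKendall w (π * swap a b) σ + 2 * wsum w a b = DKendall w π σ := by
  have key := Perm.sum_mul_swap_add (fun p q : Fin n => wsum w p q) (σ⁻¹ * π) hab.ne
  rw [DKendall_eq_sum, DKendall_eq_sum, ← mul_assoc]
  have h1 := wsum_of_le w (hab.le.trans hba : (a : ℕ) ≤ _)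
  have h2 := wsum_of_le w (hb.trans hab.le : _ ≤ (b : ℕ))
  have h3 := wsum_of_le w (hb : _ ≤ (a : ℕ))
  have h4 := wsum_of_le w (hba : (b : ℕ) ≤ _)
  have h5 := wsum_of_le w (hab.le : (a : ℕ) ≤ b)
  rw [wsum_comm w b, wsum_comm w a ((σ⁻¹ * π) b)] at key
  linarith

theorem exists_swaps_two_mul_cost_eq (π σ : Perm (Fin n)) :
    ∃ l : List (Fin n × Fin n), (∀ p ∈ l, p.1 ≠ p.2) ∧
      σ = π * (l.map fun p => swap p.1 p.2).prod ∧
      2 * (l.map fun p => wsum w p.1 p.2).sum = DKendall w π σ := by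
  by_cases hπσ : σ⁻¹ * π = 1
  · refine ⟨[], by simp, ?_, by simp [(inv_mul_eq_one.mp hπσ).symm, DKendall_self]⟩
    simp [inv_mul_eq_one.mp hπσ]
  obtain ⟨a, b, hab, hba, hb⟩ := Perm.exists_crossing_pair _ hπσ
  have hdecr : forwardDisp (σ⁻¹ * (π * swap a b)) < forwardDisp (σ⁻¹ * π) := by
    have key := Perm.sum_mul_swap_add (fun p q : Fin n => (q : ℕ) - p) (σ⁻¹ * π) hab.ne
    rw [← mul_assoc]
    simp only [forwardDisp] at key ⊢
    have : (a : ℕ) < b := hab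
    have : (b : ℕ) ≤ _ := hba
    have : _ ≤ (a : ℕ) := hb
    omega
  obtain ⟨l, hl, hσ, hcost⟩ := exists_swaps_two_mul_cost_eq (π * swap a b) σ
  refine ⟨(a, b) :: l, ?_, by simpa [mul_assoc] using hσ, ?_⟩
  · intro p hp
    rcases List.mem_cons.mp hp with rfl | hp
    exacts [hab.ne, hl p hp]
  · rw [← DKendall_mul_swap_add w hab hba hb]
    simp only [List.map_cons, List.sum_cons]
    linarith
termination_by forwardDisp (σ⁻¹ * π)

end DKendall

theorem stmt16 (n : ℕ) (w : ℕ → ℝ) (hw : ∀ i, 0 ≤ w i) (π σ : Equiv.Perm (Fin n)) :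
    wTrans (fun a b : Fin n => wsum w (a : ℕ) (b : ℕ)) π σ =
      (1 / 2) * ∑ i : Fin n, wsum w ((π⁻¹ i : Fin n) : ℕ) ((σ⁻¹ i : Fin n) : ℕ) := by
  change _ = 1 / 2 * DKendall w π σ
  refine IsLeast.csInf_eq ⟨?_, ?_⟩
  · obtain ⟨l, hl, hσ, hcost⟩ := exists_swaps_two_mul_cost_eq w π σ
    exact ⟨l, hl, hσ, by linarith⟩
  · rintro _ ⟨l, -, rfl, rfl⟩
    linarith [DKendall_mul_prod_swap_le hw π l]
end
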